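/- arXiv:2412.20594 — 4 statements merged into one kernel-verified Lean document; each statement's English description precedes it below -/
import Mathlib

section
/- For every ε > 0, there exists a binary sequence a = (a_n)_{n≥1} ∈ {0,1}^ℕ and a sequence (N_m)_{m≥1} of natural numbers such that (i) the lower Cesàro mean liminf_{n→∞} (a_1 + ... + a_n)/n ≥ 1 − ε, and (ii) for all m ∈ ℕ and all j ∈ ℕ, the finite block (a_j, a_{j+1}, ..., a_{j+N_m−1}) contains m consecutive zeros. -/
open Filter Finset

/-- For every ε > 0 there is a binary sequence `a` (indexed from 1) and
natural numbers `N m` such that the lower Cesàro mean of `a` is at least `1 - ε`, and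
every block `(a j, …, a (j + N m - 1))` contains `m` consecutive zeros. -/
theorem statement0 (ε : ℝ) (hε : 0 < ε) :
    ∃ a N : ℕ → ℕ, (∀ n, a n = 0 ∨ a n = 1) ∧
      (1 - ε ≤ Filter.atTop.liminf (fun n : ℕ => (∑ j ∈ Finset.Icc 1 n, (a j : ℝ)) / n)) ∧
      (∀ m, 1 ≤ m → ∀ j, 1 ≤ j → ∃ i, j ≤ i ∧ i + m ≤ j + N m ∧ ∀ p < m, a (i + p) = 0) := by
  classical
  obtain ⟨M, hM1, hMε⟩ : ∃ M : ℕ, 1 ≤ M ∧ 1 / (M:ℝ) ≤ ε := by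
    refine ⟨⌈1/ε⌉₊ + 1, Nat.le_add_left 1 _, ?_⟩
    have hMpos : (0:ℝ) < (⌈1/ε⌉₊ + 1 : ℕ) := by positivity
    rw [div_le_iff₀ hMpos]
    have h1 : (1:ℝ)/ε ≤ ⌈1/ε⌉₊ := Nat.le_ceil _
    have h2 : ((⌈1/ε⌉₊:ℝ)) ≤ ((⌈1/ε⌉₊ + 1 : ℕ) : ℝ) := by push_cast; linarith
    have h3 : (1:ℝ)/ε ≤ ((⌈1/ε⌉₊ + 1 : ℕ) : ℝ) := le_trans h1 h2
    rw [div_le_iff₀ hε] at h3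
    linarith [mul_comm ε (((⌈1/ε⌉₊ + 1 : ℕ)):ℝ)]
  have hMpos : (0:ℝ) < M := by exact_mod_cast Nat.lt_of_lt_of_le Nat.zero_lt_one hM1
  obtain ⟨L, hLdef⟩ : ∃ L : ℕ → ℕ, ∀ k, L k = k * 2^k * M := ⟨_, fun _ => rfl⟩
  have hLpos : ∀ k, 1 ≤ k → 0 < L k := by
    intro k hk
    rw [hLdef]
    exact Nat.mul_pos (Nat.mul_pos hk (Nat.two_pow_pos k)) hM1
  have hkL : ∀ k, k ≤ L k := by
    intro k
    rw [hLdef]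
    calc k = k * 1 * 1 := by ring
    _ ≤ k * 2^k * M := Nat.mul_le_mul (Nat.mul_le_mul_left k Nat.one_le_two_pow) hM1
  set Z : ℕ → Prop := fun i => ∃ k, 1 ≤ k ∧ ∃ t, 1 ≤ t ∧ t * L k ≤ i ∧ i < t * L k + k
    with hZdef
  refine ⟨fun i => if Z i then 0 else 1, fun m => 2 * L m, ?_, ?_, ?_⟩
  · intro n; by_cases h : Z n <;> simp [h]
  · -- Cesàro mean part
    have geom : ∀ n : ℕ, ∑ k ∈ Icc 1 n, (1/2:ℝ)^k ≤ 1 := by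
      intro n
      have h : ∀ n : ℕ, ∑ k ∈ Icc 1 n, (1/2:ℝ)^k = 1 - (1/2)^n := by
        intro n
        induction n with
        | zero => simp
        | succ n ih =>
          rw [Finset.sum_Icc_succ_top (by omega), ih]
          ring
      rw [h n]
      have : (0:ℝ) ≤ (1/2:ℝ)^n := by positivity
      linarith
    have key : ∀ n : ℕ, (((Icc 1 n).filter Z).card : ℝ) ≤ (n : ℝ) / M := by
      intro n
      have hsub : (Icc 1 n).filter Z ⊆
          (Icc 1 n).biUnion (fun k => (Icc 1 (n / L k)).biUnion
            (fun t => Ico (t * L k) (t * L k + k))) := by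
        intro i hi
        rw [mem_filter] at hi
        obtain ⟨hin, hZi⟩ := hi
        obtain ⟨k, hk1, t, ht1, htl, htr⟩ := hZi
        rw [mem_Icc] at hin
        refine mem_biUnion.2 ⟨k, ?_, mem_biUnion.2 ⟨t, ?_, ?_⟩⟩
        · rw [mem_Icc]
          refine ⟨hk1, ?_⟩
          calc k ≤ L k := hkL k
            _ ≤ t * L k := Nat.le_mul_of_pos_left _ ht1
            _ ≤ i := htl
            _ ≤ n := hin.2
        · rw [mem_Icc]
          refine ⟨ht1, ?_⟩
          rw [Nat.le_div_iff_mul_le (hLpos k hk1)]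
          exact le_trans htl hin.2
        · rw [mem_Ico]; exact ⟨htl, htr⟩
      have hcard : ((Icc 1 n).filter Z).card ≤
          ∑ k ∈ Icc 1 n, (n / L k) * k := by
        refine le_trans (Finset.card_le_card hsub) ?_
        refine le_trans (Finset.card_biUnion_le) ?_
        refine Finset.sum_le_sum fun k _ => ?_
        refine le_trans (Finset.card_biUnion_le) ?_
        apply le_of_eq
        rw [Finset.sum_congr rfl (fun t _ => by rw [Nat.card_Ico]; omega : ∀ t ∈ Icc 1 (n / L k),
          (Ico (t * L k) (t * L k + k)).card = k)]
        rw [Finset.sum_const, Nat.card_Icc, Nat.add_sub_cancel, smul_eq_mul]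
      have hterm : ∀ k ∈ Icc 1 n, (((n / L k) * k : ℕ) : ℝ) ≤
          (n : ℝ) / M * (1/2)^k := by
        intro k hk
        rw [mem_Icc] at hk
        have hk1 := hk.1
        have h2 : ((n / L k : ℕ) : ℝ) ≤ (n : ℝ) / (L k : ℝ) := Nat.cast_div_le
        have hLk : ((L k : ℕ) : ℝ) = (k : ℝ) * 2^k * M := by
          rw [hLdef]; push_cast; ring
        have hkpos : (0:ℝ) < k := by exact_mod_cast hk1
        push_cast
        calc ((n / L k : ℕ) : ℝ) * k ≤ (n : ℝ) / (L k : ℝ) * k :=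
              mul_le_mul_of_nonneg_right h2 (by positivity)
          _ = (n : ℝ) / M * (1/2)^k := by
              rw [hLk]
              field_simp
              rw [mul_assoc, ← mul_pow]; norm_num
      calc (((Icc 1 n).filter Z).card : ℝ)
          ≤ ((∑ k ∈ Icc 1 n, (n / L k) * k : ℕ) : ℝ) := by exact_mod_cast hcard
        _ = ∑ k ∈ Icc 1 n, (((n / L k) * k : ℕ) : ℝ) := by push_cast; rfl
        _ ≤ ∑ k ∈ Icc 1 n, (n : ℝ) / M * (1/2)^k := Finset.sum_le_sum hterm
        _ = (n : ℝ) / M * ∑ k ∈ Icc 1 n, (1/2:ℝ)^k := by rw [Finset.mul_sum]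
        _ ≤ (n : ℝ) / M * 1 :=
            mul_le_mul_of_nonneg_left (geom n) (by positivity)
        _ = (n : ℝ) / M := mul_one _
    have hsum : ∀ n : ℕ, (∑ j ∈ Icc 1 n, (((if Z j then 0 else 1 : ℕ)) : ℝ)) =
        (n : ℝ) - ((Icc 1 n).filter Z).card := by
      intro n
      have h1 : (∑ j ∈ Icc 1 n, (((if Z j then 0 else 1 : ℕ)) : ℝ)) =
          ∑ j ∈ Icc 1 n, (if Z j then (0:ℝ) else 1) := by
        apply Finset.sum_congr rfl
        intro j _
        by_cases h : Z j <;> simp [h]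
      rw [h1, Finset.sum_ite, Finset.sum_const, Finset.sum_const]
      have hc : ((Icc 1 n).filter Z).card + ((Icc 1 n).filter (fun j => ¬ Z j)).card = n := by
        rw [Finset.card_filter_add_card_filter_not, Nat.card_Icc]
        omega
      have hle : ((Icc 1 n).filter Z).card ≤ n := by omega
      have heq : ((Icc 1 n).filter (fun j => ¬ Z j)).card = n - ((Icc 1 n).filter Z).card := by
        omega
      have h2 : (((Icc 1 n).filter (fun j => ¬ Z j)).card : ℝ)
          = (n : ℝ) - ((Icc 1 n).filter Z).card := by
        rw [heq, Nat.cast_sub hle]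
      simp only [Finset.sum_const, nsmul_eq_mul, smul_eq_mul, mul_zero, mul_one, zero_add]
      exact h2
    have hlow : ∀ n : ℕ, 1 ≤ n →
        1 - ε ≤ (∑ j ∈ Icc 1 n, (((if Z j then 0 else 1 : ℕ)) : ℝ)) / n := by
      intro n hn
      have hnpos : (0:ℝ) < n := by exact_mod_cast hn
      rw [hsum n, le_div_iff₀ hnpos]
      have hk := key n
      have h4 : (n:ℝ)/M ≤ ε * n := by
        calc (n:ℝ)/M = n * (1/M) := by ring
          _ ≤ n * ε := mul_le_mul_of_nonneg_left hMε (le_of_lt hnpos)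
          _ = ε * n := by ring
      linarith
    have hub : ∀ n : ℕ, (∑ j ∈ Icc 1 n, (((if Z j then 0 else 1 : ℕ)) : ℝ)) / n ≤ 1 := by
      intro n
      rcases Nat.eq_zero_or_pos n with h | h
      · subst h; simp
      · have hnpos : (0:ℝ) < n := by exact_mod_cast h
        rw [div_le_one hnpos, hsum n]
        have : (0:ℝ) ≤ ((Icc 1 n).filter Z).card := by positivity
        linarith
    apply Filter.le_liminf_of_le
    · exact Filter.IsBoundedUnder.isCoboundedUnder_ge ⟨1, Filter.eventually_map.2
        (Filter.Eventually.of_forall hub)⟩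
    · filter_upwards [Filter.eventually_ge_atTop 1] with n hn
      exact hlow n hn
  · -- block property
    intro m hm j hj
    refine ⟨(j / L m + 1) * L m, ?_, ?_, ?_⟩
    · have h2 := Nat.mod_lt j (hLpos m hm)
      calc j = L m * (j / L m) + j % L m := (Nat.div_add_mod j (L m)).symm
        _ ≤ L m * (j / L m) + L m := by omega
        _ = (j / L m + 1) * L m := by ring
    · have h1 : j / L m * L m ≤ j := Nat.div_mul_le_self j (L m)
      have h2 : m ≤ L m := hkL m
      calc (j / L m + 1) * L m + m = j / L m * L m + L m + m := by ring
        _ ≤ j + L m + L m := by omega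
        _ = j + 2 * L m := by ring
    · intro p hp
      have hZ : Z ((j / L m + 1) * L m + p) :=
        ⟨m, hm, j / L m + 1, Nat.le_add_left 1 _, Nat.le_add_right _ _, by omega⟩
      simp [hZ]
end

section
/- Let K ⊂ ℝ^d be a nonempty compact set with an inner regular partition B (with parameters ρ ∈ (0,1), constants 0 < c ≤ C) and associated coding tree T. Then the lower dimension of the boundary of T is at most the lower dimension of K: dim_L ∂T ≤ dim_L K. -/
open Metric MeasureTheory
open scoped ENNReal

/-- The covering number `N_r(F)`. -/
noncomputable def coverNum {X : Type*} [MetricSpace X] (r : ℝ) (F : Set X) : ℕ∞ :=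
  sInf ((fun S : Finset X => (S.card : ℕ∞)) ''
    {S : Finset X | ↑S ⊆ F ∧ F ⊆ ⋃ x ∈ S, closedBall x r})

/-- The lower dimension of a set. -/
noncomputable def lowerDim {X : Type*} [MetricSpace X] (K : Set X) : ℝ :=
  sSup {α : ℝ | 0 < α ∧ ∃ C : ℝ, 0 < C ∧ ∀ r R : ℝ, 0 < r → r ≤ R → R < 1 → ∀ x ∈ K,
    ENNReal.ofReal (C * (R / r) ^ α) ≤ (coverNum r (closedBall x R ∩ K) : ℝ≥0∞)}

/-- An inner regular partition of a compact set `K ⊆ ℝᵈ`. -/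
structure InnerRegularPartition (d : ℕ) (K : Set (EuclideanSpace ℝ (Fin d)))
    (ρ c C : ℝ) where
  idx : ℕ → Finset ℕ
  Q : ℕ → ℕ → Set (EuclideanSpace ℝ (Fin d))
  pt : ℕ → ℕ → EuclideanSpace ℝ (Fin d)
  idx_zero : (idx 0).card = 1
  idx_nonempty : ∀ k, (idx k).Nonempty
  Q_nonempty : ∀ k, ∀ i ∈ idx k, (Q k i).Nonempty
  Q_borel : ∀ k, ∀ i ∈ idx k, MeasurableSet (Q k i)
  pt_mem : ∀ k, ∀ i ∈ idx k, pt k i ∈ K ∩ Q k i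
  cover : ∀ k, K = ⋃ i ∈ idx k, Q k i
  disjoint : ∀ k, ∀ i ∈ idx k, ∀ j ∈ idx k, i ≠ j → Disjoint (Q k i) (Q k j)
  tree : ∀ k m, k ≤ m → ∀ i ∈ idx k, ∀ j ∈ idx m,
    Disjoint (Q k i) (Q m j) ∨ Q m j ⊆ Q k i
  ball_subset : ∀ k, ∀ i ∈ idx k, closedBall (pt k i) (c * ρ ^ k) ∩ K ⊆ Q k i
  subset_ball : ∀ k, ∀ i ∈ idx k, Q k i ⊆ closedBall (pt k i) (C * ρ ^ k)
  centres_persist : ∀ k, ∀ i ∈ idx k, ∃ j ∈ idx (k + 1), pt (k + 1) j = pt k i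

/-- The lower dimension of the boundary of the coding tree of an inner regular
partition: the supremum of exponents `s > 0` for which the number of level-`k`
cylinders contained in any level-`m` cylinder is at least `C' ρ^((m-k)s)`. -/
noncomputable def partitionTreeLowerDim {d : ℕ} {K : Set (EuclideanSpace ℝ (Fin d))}
    {ρ c C : ℝ} (B : InnerRegularPartition d K ρ c C) : ℝ :=
  sSup {s : ℝ | 0 < s ∧ ∃ C' : ℝ, 0 < C' ∧ ∀ m k : ℕ, m ≤ k → ∀ i ∈ B.idx m,
    C' * ρ ^ (((m : ℝ) - (k : ℝ)) * s) ≤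
      ({j | j ∈ B.idx k ∧ B.Q k j ⊆ B.Q m i}.ncard : ℝ)}



/-- packing bound for separated sets in a ball -/
lemma aux_separated_card {d : ℕ} (x : EuclideanSpace ℝ (Fin d)) {R r : ℝ}
    (hr : 0 < r) (hR : 0 ≤ R) (S : Finset (EuclideanSpace ℝ (Fin d)))
    (hS : ∀ p ∈ S, p ∈ closedBall x R)
    (hsep : ∀ p ∈ S, ∀ q ∈ S, p ≠ q → r < dist p q) :
    (S.card : ℝ) * (r / 2) ^ d ≤ (R + r / 2) ^ d := by
  have hb0 : volume (ball (0 : EuclideanSpace ℝ (Fin d)) 1) ≠ 0 :=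
    (measure_ball_pos _ _ one_pos).ne'
  have hbt : volume (ball (0 : EuclideanSpace ℝ (Fin d)) 1) ≠ ⊤ := measure_ball_lt_top.ne
  have hr2 : (0:ℝ) < r / 2 := by linarith
  have hdisj : (↑S : Set (EuclideanSpace ℝ (Fin d))).PairwiseDisjoint
      (fun p => ball p (r/2)) := by
    intro p hp q hq hpq
    exact ball_disjoint_ball (by linarith [hsep p hp q hq hpq])
  have hsum : volume (⋃ p ∈ S, ball p (r/2)) = ∑ p ∈ S, volume (ball p (r/2)) :=
    measure_biUnion_finset hdisj fun p _ => measurableSet_ball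
  have hsub : (⋃ p ∈ S, ball p (r/2)) ⊆ closedBall x (R + r/2) := by
    intro y hy
    obtain ⟨p, hp, hyp⟩ := Set.mem_iUnion₂.1 hy
    have h1 : dist p x ≤ R := mem_closedBall.1 (hS p hp)
    have h2 : dist y p < r/2 := mem_ball.1 hyp
    exact mem_closedBall.2 (le_trans (dist_triangle y p x) (by linarith))
  have hball : ∀ p : EuclideanSpace ℝ (Fin d),
      volume (ball p (r/2)) = ENNReal.ofReal ((r/2) ^ d) *
        volume (ball (0 : EuclideanSpace ℝ (Fin d)) 1) := by
    intro p
    rw [Measure.addHaar_ball_of_pos volume p hr2, finrank_euclideanSpace_fin]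
  have key : (S.card : ℝ≥0∞) * ENNReal.ofReal ((r/2)^d) *
      volume (ball (0 : EuclideanSpace ℝ (Fin d)) 1)
      ≤ ENNReal.ofReal ((R + r/2)^d) * volume (ball (0 : EuclideanSpace ℝ (Fin d)) 1) := by
    have h1 : ∑ p ∈ S, volume (ball p (r/2)) = (S.card : ℝ≥0∞) * ENNReal.ofReal ((r/2)^d) *
        volume (ball (0 : EuclideanSpace ℝ (Fin d)) 1) := by
      rw [Finset.sum_congr rfl (fun p _ => hball p), Finset.sum_const, nsmul_eq_mul, mul_assoc]
    calc (S.card : ℝ≥0∞) * ENNReal.ofReal ((r/2)^d) *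
          volume (ball (0 : EuclideanSpace ℝ (Fin d)) 1)
        = volume (⋃ p ∈ S, ball p (r/2)) := by rw [hsum, h1]
      _ ≤ volume (closedBall x (R + r/2)) := measure_mono hsub
      _ = _ := by
          rw [Measure.addHaar_closedBall volume x (by linarith), finrank_euclideanSpace_fin]
  rw [ENNReal.mul_le_mul_iff_left hb0 hbt] at key
  have key2 : ENNReal.ofReal ((S.card : ℝ) * (r/2)^d) ≤ ENNReal.ofReal ((R + r/2)^d) := by
    rw [ENNReal.ofReal_mul (by positivity), ENNReal.ofReal_natCast]
    exact key
  exact (ENNReal.ofReal_le_ofReal_iff (by positivity)).1 key2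

/-- lower bound for covering numbers from separated subsets -/
lemma le_coverNum_of_separated {X : Type*} [MetricSpace X] {r : ℝ} (hr : 0 < r) {F : Set X}
    (T : Finset X) (hTF : ↑T ⊆ F)
    (hsep : ∀ p ∈ T, ∀ q ∈ T, p ≠ q → 2 * r < dist p q) :
    (T.card : ℕ∞) ≤ coverNum r F := by
  classical
  refine le_sInf ?_
  rintro _ ⟨S, ⟨hSF, hcov⟩, rfl⟩
  simp only [Nat.cast_le]
  have hex : ∀ p : X, ∃ q : X, p ∈ T → q ∈ S ∧ dist p q ≤ r := by
    intro p
    by_cases hp : p ∈ T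
    · obtain ⟨q, hq, hd⟩ := Set.mem_iUnion₂.1 (hcov (hTF hp))
      exact ⟨q, fun _ => ⟨hq, mem_closedBall.1 hd⟩⟩
    · exact ⟨p, fun h => absurd h hp⟩
  choose f hf using hex
  refine Finset.card_le_card_of_injOn f (fun p hp => ((hf p) hp).1) ?_
  intro p hp q hq hfe
  by_contra hne
  have h1 := (hf p (Finset.mem_coe.1 hp)).2
  have h2 := (hf q (Finset.mem_coe.1 hq)).2
  have h3 := hsep p (Finset.mem_coe.1 hp) q (Finset.mem_coe.1 hq) hne
  have h4 : dist p q ≤ dist p (f p) + dist (f q) q := by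
    rw [hfe]
    exact dist_triangle p (f q) q
  rw [dist_comm (f q) q] at h4
  linarith

/-- existence of a good (maximal separated) cover inside a ball -/
lemma exists_good_cover {d : ℕ} (x : EuclideanSpace ℝ (Fin d)) {R r : ℝ}
    (hr : 0 < r) (hR : 0 ≤ R) {F : Set (EuclideanSpace ℝ (Fin d))}
    (hF : F ⊆ closedBall x R) :
    ∃ S : Finset (EuclideanSpace ℝ (Fin d)), ↑S ⊆ F ∧
      (F ⊆ ⋃ p ∈ S, closedBall p r) ∧ (S.card : ℝ) * (r / 2) ^ d ≤ (R + r / 2) ^ d := by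
  classical
  set 𝒞 : Set ℕ := {n | ∃ S : Finset (EuclideanSpace ℝ (Fin d)), ↑S ⊆ F ∧
    (∀ p ∈ S, ∀ q ∈ S, p ≠ q → r < dist p q) ∧ S.card = n} with h𝒞
  have hbdd : BddAbove 𝒞 := by
    refine ⟨Nat.ceil (((R + r/2)^d) / ((r/2)^d)), ?_⟩
    rintro n ⟨S, hSF, hsep, rfl⟩
    have hcard := aux_separated_card x hr hR S (fun p hp => hF (hSF hp)) hsep
    have h2 : (0:ℝ) < (r/2)^d := by positivity
    have h3 : (S.card : ℝ) ≤ ((R + r/2)^d) / ((r/2)^d) := by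
      rw [le_div_iff₀ h2]; exact hcard
    exact_mod_cast h3.trans (Nat.le_ceil _)
  have hne : 𝒞.Nonempty := ⟨0, ∅, by simp, by simp, rfl⟩
  obtain ⟨S, hSF, hsep, hScard⟩ := Nat.sSup_mem hne hbdd
  refine ⟨S, hSF, ?_, aux_separated_card x hr hR S (fun p hp => hF (hSF hp)) hsep⟩
  intro y hy
  by_contra hyc
  have hsep' : ∀ p ∈ S, r < dist y p := by
    intro p hp
    by_contra hle
    push_neg at hle
    exact hyc (Set.mem_iUnion₂.2 ⟨p, hp, mem_closedBall.2 hle⟩)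
  have hyS : y ∉ S := by
    intro h
    have := hsep' y h
    rw [dist_self] at this
    linarith
  have hmem : S.card + 1 ∈ 𝒞 := by
    refine ⟨insert y S, ?_, ?_, by rw [Finset.card_insert_of_notMem hyS]⟩
    · intro p hp
      rcases Finset.mem_insert.1 (Finset.mem_coe.1 hp) with h | h
      · exact h ▸ hy
      · exact hSF (Finset.mem_coe.2 h)
    · intro p hp q hq hpq
      rcases Finset.mem_insert.1 hp with h1 | h1 <;> rcases Finset.mem_insert.1 hq with h2 | h2
      · exact absurd (h1.trans h2.symm) hpq
      · exact h1 ▸ hsep' q h2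
      · rw [dist_comm]; exact h2 ▸ hsep' p h1
      · exact hsep p h1 q h2 hpq
  have := le_csSup hbdd hmem
  rw [hScard] at this
  omega

lemma lowerDim_mem_le {d : ℕ} {K : Set (EuclideanSpace ℝ (Fin d))} (hne : K.Nonempty)
    {α : ℝ} (hα : 0 < α) {c2 : ℝ} (hc2 : 0 < c2)
    (h : ∀ r R : ℝ, 0 < r → r ≤ R → R < 1 → ∀ x ∈ K,
      ENNReal.ofReal (c2 * (R / r) ^ α) ≤ (coverNum r (closedBall x R ∩ K) : ℝ≥0∞)) :
    α ≤ (d : ℝ) := by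
  by_contra hlt
  push_neg at hlt
  obtain ⟨x, hx⟩ := hne
  have hαd : (0:ℝ) < α - d := by linarith
  set w : ℝ := (4 ^ d / c2 + 1) ^ ((α - (d:ℝ))⁻¹) with hw
  have hwpos : 0 < w := Real.rpow_pos_of_pos (by positivity) _
  set t : ℝ := max 1 w with ht
  have ht1 : (1:ℝ) ≤ t := le_max_left _ _
  have ht0 : (0:ℝ) < t := lt_of_lt_of_le one_pos ht1
  set r : ℝ := (1/2) / t with hrdef
  have hr0 : 0 < r := by positivity
  have hrhalf : r ≤ 1/2 := by
    rw [hrdef, div_le_iff₀ ht0]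
    nlinarith
  have key := h r (1/2) hr0 (by linarith) (by norm_num) x hx
  obtain ⟨S, hSF, hcov, hcard⟩ := exists_good_cover x hr0 (by norm_num)
    (F := closedBall x (1/2) ∩ K) Set.inter_subset_left
  have hcover : coverNum r (closedBall x (1/2) ∩ K) ≤ (S.card : ℕ∞) :=
    sInf_le ⟨S, ⟨hSF, hcov⟩, rfl⟩
  have hkey2 : ENNReal.ofReal (c2 * ((1/2) / r) ^ α) ≤ ((S.card : ℕ∞) : ℝ≥0∞) :=
    key.trans (ENat.toENNReal_mono hcover)
  rw [ENat.toENNReal_coe, ← ENNReal.ofReal_natCast] at hkey2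
  have hreal : c2 * ((1/2) / r) ^ α ≤ (S.card : ℝ) :=
    (ENNReal.ofReal_le_ofReal_iff (Nat.cast_nonneg _)).1 hkey2
  have h2 : (0:ℝ) < (r/2)^d := by positivity
  have hcard2 : (S.card:ℝ) ≤ (2/r)^d := by
    have hb : (1/2 + r/2 : ℝ) ≤ 1 := by linarith
    have h3 : (S.card : ℝ) * (r/2)^d ≤ 1 := by
      refine hcard.trans ?_
      exact pow_le_one₀ (by positivity) hb
    have h4 : ((2:ℝ)/r)^d * (r/2)^d = 1 := by
      rw [← mul_pow]
      rw [show (2/r) * (r/2) = 1 by field_simp]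
      exact one_pow d
    nlinarith [pow_pos (show (0:ℝ) < 2/r by positivity) d]
  have htr : (1/2 : ℝ) / r = t := by
    rw [hrdef]
    field_simp
  have h2r : (2 : ℝ)/r = 4 * t := by
    rw [hrdef]
    field_simp
    ring
  rw [htr] at hreal
  rw [h2r] at hcard2
  have hmain : c2 * t ^ α ≤ 4^d * t^(d:ℝ) := by
    have : c2 * t ^ α ≤ (4*t)^d := hreal.trans hcard2
    calc c2 * t ^ α ≤ (4*t)^d := this
      _ = 4^d * t^(d:ℝ) := by rw [mul_pow, Real.rpow_natCast]
  have hsplit : t ^ α = t ^ (d:ℝ) * t ^ (α - d) := by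
    rw [← Real.rpow_add ht0]
    norm_num
  rw [hsplit] at hmain
  have htd : (0:ℝ) < t ^ (d:ℝ) := Real.rpow_pos_of_pos ht0 _
  have hmain2 : c2 * t ^ (α - d) ≤ 4^d := by
    have := mul_le_mul_of_nonneg_right hmain (le_of_lt (inv_pos.2 htd))
    calc c2 * t ^ (α - d) = c2 * (t ^ (d:ℝ) * t ^ (α - d)) * (t ^ (d:ℝ))⁻¹ := by
          field_simp
      _ ≤ 4^d * t^(d:ℝ) * (t ^ (d:ℝ))⁻¹ := this
      _ = 4^d := by field_simp
  have htw : t ^ (α - d) ≥ 4^d/c2 + 1 := by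
    have h5 : w ^ (α - (d:ℝ)) = 4 ^ d / c2 + 1 := by
      rw [hw, ← Real.rpow_natCast (4:ℝ) d]
      rw [← Real.rpow_mul (by positivity)]
      rw [inv_mul_cancel₀ (ne_of_gt hαd)]
      rw [Real.rpow_one, Real.rpow_natCast]
    calc 4^d/c2 + 1 = w ^ (α - (d:ℝ)) := h5.symm
      _ ≤ t ^ (α - d) := Real.rpow_le_rpow hwpos.le (le_max_right _ _) hαd.le
  nlinarith [mul_le_mul_of_nonneg_left htw hc2.le, mul_div_cancel₀ (4^d : ℝ) (ne_of_gt hc2)]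

lemma memS2 {d : ℕ} {K : Set (EuclideanSpace ℝ (Fin d))} {ρ c C : ℝ}
    (hρ0 : 0 < ρ) (hρ1 : ρ < 1) (hc : 0 < c) (hcC : c ≤ C)
    (B : InnerRegularPartition d K ρ c C) {s : ℝ} (hs0 : 0 < s)
    {C' : ℝ} (hC' : 0 < C')
    (hcnt : ∀ m k : ℕ, m ≤ k → ∀ i ∈ B.idx m,
      C' * ρ ^ (((m : ℝ) - (k : ℝ)) * s) ≤
        ({j | j ∈ B.idx k ∧ B.Q k j ⊆ B.Q m i}.ncard : ℝ)) :
    ∃ c2 : ℝ, 0 < c2 ∧ ∀ r R : ℝ, 0 < r → r ≤ R → R < 1 → ∀ x ∈ K,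
      ENNReal.ofReal (c2 * (R / r) ^ s) ≤ (coverNum r (closedBall x R ∩ K) : ℝ≥0∞) := by
  classical
  have hC0 : 0 < C := lt_of_lt_of_le hc hcC
  set A : ℝ := max 1 (2 * C / ρ) with hA
  have hA1 : (1:ℝ) ≤ A := le_max_left _ _
  have hA0 : (0:ℝ) < A := by linarith
  set c2 : ℝ := min (C' * ((c * ρ) / (2 * A)) ^ s) ((c / (2 * A)) ^ s) with hc2
  have hbase1 : (0:ℝ) < (c * ρ) / (2 * A) := by positivity
  have hbase2 : (0:ℝ) < c / (2 * A) := by positivity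
  have hc2pos : 0 < c2 := by
    apply lt_min
    · exact mul_pos hC' (Real.rpow_pos_of_pos hbase1 s)
    · exact Real.rpow_pos_of_pos hbase2 s
  refine ⟨c2, hc2pos, ?_⟩
  intro r R hr hrR hR1 x hx
  have hR0 : 0 < R := lt_of_lt_of_le hr hrR
  have hex : ∃ m : ℕ, 2 * C * ρ ^ m ≤ R := by
    obtain ⟨n, hn⟩ := exists_pow_lt_of_lt_one (show (0:ℝ) < R / (2 * C) by positivity) hρ1
    rw [lt_div_iff₀ (by positivity)] at hn
    exact ⟨n, by nlinarith⟩
  obtain ⟨m, hmspec, hmmin⟩ : ∃ m : ℕ, 2 * C * ρ ^ m ≤ R ∧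
      ∀ l, l < m → ¬ 2 * C * ρ ^ l ≤ R :=
    ⟨Nat.find hex, Nat.find_spec hex, fun l hl => Nat.find_min hex hl⟩
  have hRA : R ≤ A * ρ ^ m := by
    rcases Nat.eq_zero_or_pos m with h0 | hpos
    · rw [h0, pow_zero, mul_one]
      exact le_trans hR1.le hA1
    · have hlt := hmmin (m-1) (show m - 1 < m by omega)
      push_neg at hlt
      have hsucc : ρ ^ m = ρ * ρ ^ (m - 1) := by
        rw [← pow_succ']
        congr 1
        omega
      have h1 : R < 2 * C * ρ ^ (m-1) := hlt
      have h2 : (2*C/ρ) * ρ ^ m = 2 * C * ρ ^ (m-1) := by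
        rw [hsucc]
        field_simp
      have h3 : (2*C/ρ) * ρ ^ m ≤ A * ρ ^ m :=
        mul_le_mul_of_nonneg_right (le_max_right _ _) (by positivity)
      linarith
  have hxU : x ∈ ⋃ i ∈ B.idx m, B.Q m i := by
    rw [← B.cover m]; exact hx
  obtain ⟨i, hi, hxQ⟩ := Set.mem_iUnion₂.1 hxU
  have hQsub : B.Q m i ⊆ closedBall x R := by
    intro y hy
    have h1 : dist y (B.pt m i) ≤ C * ρ ^ m := mem_closedBall.1 (B.subset_ball m i hi hy)
    have h2 : dist x (B.pt m i) ≤ C * ρ ^ m := mem_closedBall.1 (B.subset_ball m i hi hxQ)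
    have h3 : dist y x ≤ dist y (B.pt m i) + dist (B.pt m i) x := dist_triangle _ _ _
    rw [dist_comm (B.pt m i) x] at h3
    exact mem_closedBall.2 (by linarith)
  by_cases hcase : c * ρ ^ m ≤ 2 * r
  · -- degenerate case: coverNum ≥ 1 and R/r bounded
    have hxF : x ∈ closedBall x R ∩ K := ⟨mem_closedBall_self hR0.le, hx⟩
    have h1 : (1 : ℕ∞) ≤ coverNum r (closedBall x R ∩ K) := by
      have hsing := le_coverNum_of_separated (F := closedBall x R ∩ K) hr
        ({x} : Finset _)
        (by
          rw [Finset.coe_singleton, Set.singleton_subset_iff]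
          exact hxF)
        (by
          intro p hp q hq hpq
          simp only [Finset.mem_singleton] at hp hq
          exact absurd (hp.trans hq.symm) hpq)
      simpa using hsing
    have hRr : R / r ≤ 2 * A / c := by
      rw [div_le_div_iff₀ hr hc]
      have hρm : ρ ^ m ≤ 2 * r / c := by
        rw [le_div_iff₀ hc]
        linarith
      have : A * ρ ^ m ≤ A * (2 * r / c) := mul_le_mul_of_nonneg_left hρm hA0.le
      have hAr : A * (2 * r / c) * c = 2 * A * r := by field_simp
      nlinarith
    have hfin : c2 * (R/r)^s ≤ 1 := by
      have h1' : (R/r)^s ≤ (2*A/c)^s :=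
        Real.rpow_le_rpow (by positivity) hRr hs0.le
      have hmul : (c/(2*A))^s * (2*A/c)^s = 1 := by
        rw [← Real.mul_rpow hbase2.le (by positivity),
          show c/(2*A) * (2*A/c) = 1 by field_simp, Real.one_rpow]
      have hcc : c2 ≤ (c/(2*A))^s := min_le_right _ _
      calc c2 * (R/r)^s ≤ (c/(2*A))^s * (2*A/c)^s := by
            apply mul_le_mul hcc h1' (Real.rpow_nonneg (by positivity) s)
              (Real.rpow_nonneg hbase2.le s)
        _ = 1 := hmul
    calc ENNReal.ofReal (c2 * (R/r)^s) ≤ 1 := ENNReal.ofReal_le_one.2 hfin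
      _ = ((1 : ℕ∞) : ℝ≥0∞) := by simp
      _ ≤ _ := ENat.toENNReal_mono h1
  · -- main case
    push_neg at hcase
    have hexk : ∃ k : ℕ, c * ρ ^ k ≤ 2 * r := by
      obtain ⟨n, hn⟩ := exists_pow_lt_of_lt_one (show (0:ℝ) < 2*r/c by positivity) hρ1
      rw [lt_div_iff₀ hc] at hn
      exact ⟨n, by nlinarith⟩
    obtain ⟨k, hmk, hksep, hkr⟩ : ∃ k : ℕ, m ≤ k ∧ 2*r < c * ρ ^ k ∧
        c * ρ ^ (k+1) ≤ 2*r := by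
      have hk0spec : c * ρ ^ (Nat.find hexk) ≤ 2*r := Nat.find_spec hexk
      have hmk0 : m < Nat.find hexk := by
        by_contra hcon
        push_neg at hcon
        have h1 : ρ ^ m ≤ ρ ^ (Nat.find hexk) := pow_le_pow_of_le_one hρ0.le hρ1.le hcon
        nlinarith
      refine ⟨Nat.find hexk - 1, by omega, ?_, ?_⟩
      · have h1 := Nat.find_min hexk (show Nat.find hexk - 1 < Nat.find hexk by omega)
        push_neg at h1
        exact h1
      · have heq : Nat.find hexk - 1 + 1 = Nat.find hexk := by omega
        rw [heq]
        exact hk0spec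
    set J : Finset ℕ := (B.idx k).filter (fun j => B.Q k j ⊆ B.Q m i) with hJ
    have hJset : {j | j ∈ B.idx k ∧ B.Q k j ⊆ B.Q m i} = ↑J := by
      ext j
      simp [hJ, Finset.mem_filter]
    have hcnt' := hcnt m k hmk i hi
    rw [hJset, Set.ncard_coe_finset] at hcnt'
    have hptsep : ∀ j ∈ J, ∀ j' ∈ J, j ≠ j' →
        c * ρ ^ k < dist (B.pt k j) (B.pt k j') := by
      intro j hj j' hj' hne
      have hjk : j ∈ B.idx k := (Finset.mem_filter.1 hj).1
      have hjk' : j' ∈ B.idx k := (Finset.mem_filter.1 hj').1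
      by_contra hle
      push_neg at hle
      have hmem : B.pt k j' ∈ closedBall (B.pt k j) (c * ρ ^ k) ∩ K := by
        constructor
        · rw [mem_closedBall, dist_comm]
          exact hle
        · exact (B.pt_mem k j' hjk').1
      have h1 : B.pt k j' ∈ B.Q k j := B.ball_subset k j hjk hmem
      have h2 : B.pt k j' ∈ B.Q k j' := (B.pt_mem k j' hjk').2
      exact Set.disjoint_left.1 (B.disjoint k j hjk j' hjk' hne) h1 h2
    have hptinj : Set.InjOn (B.pt k) ↑J := by
      intro j hj j' hj' he
      by_contra hne
      have h1 := hptsep j (Finset.mem_coe.1 hj) j' (Finset.mem_coe.1 hj') hne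
      rw [he, dist_self] at h1
      nlinarith [pow_pos hρ0 k]
    set T : Finset (EuclideanSpace ℝ (Fin d)) := J.image (B.pt k) with hT
    have hTcard : T.card = J.card := Finset.card_image_of_injOn hptinj
    have hTF : ↑T ⊆ closedBall x R ∩ K := by
      intro p hp
      simp only [hT, Finset.coe_image, Set.mem_image, Finset.mem_coe] at hp
      obtain ⟨j, hj, rfl⟩ := hp
      have hjk : j ∈ B.idx k := (Finset.mem_filter.1 hj).1
      have hsub : B.Q k j ⊆ B.Q m i := (Finset.mem_filter.1 hj).2
      exact ⟨hQsub (hsub ((B.pt_mem k j hjk).2)), (B.pt_mem k j hjk).1⟩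
    have hTsep : ∀ p ∈ T, ∀ q ∈ T, p ≠ q → 2*r < dist p q := by
      intro p hp q hq hpq
      obtain ⟨j, hj, rfl⟩ := Finset.mem_image.1 hp
      obtain ⟨j', hj', rfl⟩ := Finset.mem_image.1 hq
      have hne : j ≠ j' := by
        rintro rfl
        exact hpq rfl
      exact lt_trans hksep (hptsep j hj j' hj' hne)
    have hcov := le_coverNum_of_separated hr T hTF hTsep
    have hρk : (0:ℝ) < ρ ^ k := pow_pos hρ0 k
    have hρm : (0:ℝ) < ρ ^ m := pow_pos hρ0 m
    have hrlow : (c * ρ / 2) * ρ ^ k ≤ r := by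
      have h1 : c * ρ ^ (k+1) = (c * ρ) * ρ ^ k := by
        rw [pow_succ]
        ring
      nlinarith
    have hRr : R / r ≤ (2*A/(c*ρ)) * (ρ^m / ρ^k) := by
      have h1 : R / r ≤ (A * ρ^m) / ((c * ρ / 2) * ρ ^ k) := by
        apply div_le_div₀ (by positivity) hRA (by positivity) hrlow
      refine h1.trans (le_of_eq ?_)
      rw [div_mul_div_comm, div_eq_div_iff (by positivity) (by positivity)]
      ring
    have hrpow : (R/r) ^ s ≤ (2*A/(c*ρ))^s * ρ ^ (((m:ℝ)-(k:ℝ))*s) := by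
      have h1 : (R/r)^s ≤ ((2*A/(c*ρ)) * (ρ^m/ρ^k))^s :=
        Real.rpow_le_rpow (by positivity) hRr hs0.le
      rw [Real.mul_rpow (by positivity) (by positivity)] at h1
      have h2 : (ρ^m/ρ^k : ℝ) = ρ ^ ((m:ℝ) - (k:ℝ)) := by
        rw [Real.rpow_sub hρ0, Real.rpow_natCast, Real.rpow_natCast]
      rw [h2, ← Real.rpow_mul hρ0.le] at h1
      exact h1
    have hfinal : c2 * (R/r)^s ≤ (J.card : ℝ) := by
      have hcc : c2 ≤ C' * ((c*ρ)/(2*A))^s := min_le_left _ _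
      have hprod : ((c*ρ)/(2*A))^s * (2*A/(c*ρ))^s = 1 := by
        rw [← Real.mul_rpow hbase1.le (by positivity),
          show (c*ρ)/(2*A) * (2*A/(c*ρ)) = 1 by field_simp, Real.one_rpow]
      have hρs : (0:ℝ) ≤ ρ ^ (((m:ℝ)-(k:ℝ))*s) := Real.rpow_nonneg hρ0.le _
      calc c2 * (R/r)^s
          ≤ (C' * ((c*ρ)/(2*A))^s) * ((2*A/(c*ρ))^s * ρ ^ (((m:ℝ)-(k:ℝ))*s)) := by
            apply mul_le_mul hcc hrpow (Real.rpow_nonneg (by positivity) s)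
              (by positivity)
        _ = C' * (((c*ρ)/(2*A))^s * (2*A/(c*ρ))^s) * ρ ^ (((m:ℝ)-(k:ℝ))*s) := by ring
        _ = C' * ρ ^ (((m:ℝ)-(k:ℝ))*s) := by rw [hprod, mul_one]
        _ ≤ (J.card : ℝ) := hcnt'
    calc ENNReal.ofReal (c2 * (R/r)^s)
        ≤ ENNReal.ofReal (J.card : ℝ) := ENNReal.ofReal_le_ofReal hfinal
      _ = ((J.card : ℕ∞) : ℝ≥0∞) := by rw [ENNReal.ofReal_natCast, ENat.toENNReal_coe]
      _ = ((T.card : ℕ∞) : ℝ≥0∞) := by rw [hTcard]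
      _ ≤ _ := ENat.toENNReal_mono hcov

/-- `dim_L ∂T ≤ dim_L K` for the coding tree `T` of an inner regular
partition of `K`. -/
theorem statement9 {d : ℕ} (K : Set (EuclideanSpace ℝ (Fin d)))
    (hne : K.Nonempty) (hK : IsCompact K) (ρ c C : ℝ)
    (hρ : ρ ∈ Set.Ioo (0 : ℝ) 1) (hc : 0 < c) (hcC : c ≤ C)
    (B : InnerRegularPartition d K ρ c C) :
    partitionTreeLowerDim B ≤ lowerDim K := by
  obtain ⟨hρ0, hρ1⟩ := hρ
  rw [partitionTreeLowerDim, lowerDim]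
  apply Real.sSup_le _ (Real.sSup_nonneg (fun x hx => hx.1.le))
  intro s hs
  obtain ⟨hs0, C', hC', hcnt⟩ := hs
  obtain ⟨c2, hc2, hcond⟩ := memS2 hρ0 hρ1 hc hcC B hs0 hC' hcnt
  apply le_csSup
  · refine ⟨(d:ℝ), ?_⟩
    rintro α ⟨hα, c3, hc3, hcond3⟩
    exact lowerDim_mem_le hne hα hc3 hcond3
  · exact ⟨hs0, c2, hc2, hcond⟩
end

section
/- Let T be a (ρ, M)-tree with boundary lower dimension dim_L ∂T. Then for all t > dim_L ∂T and all ℓ ∈ ℕ, there exist n ≥ ℓ, a level-n node Q ∈ T_n, and k ≥ n + ℓ such that for all j = 0,...,ℓ and every level-j node Q' of the subtree T^Q rooted at Q, #(Q' ∩ T^Q_{k−n}) / #T^Q_{k−n} ≥ ρ^{tj}. -/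
/-- A `(ρ, M)`-tree: a nonempty prefix-closed set of finite words over `{1,…,M}`
(containing the empty word) in which every word has at least one one-letter extension. -/
def IsTree (M : ℕ) (T : Set (List (Fin M))) : Prop :=
  [] ∈ T ∧ (∀ w ∈ T, ∀ v : List (Fin M), v <+: w → v ∈ T) ∧
    ∀ w ∈ T, ∃ a : Fin M, w ++ [a] ∈ T

def S11desc (M : ℕ) (T : Set (List (Fin M))) (Q : List (Fin M)) (k : ℕ) : Set (List (Fin M)) :=
  {b | b ∈ T ∧ b.length = k ∧ Q <+: b}

lemma S11desc_finite (M : ℕ) (T : Set (List (Fin M))) (Q : List (Fin M)) (k : ℕ) :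
    (S11desc M T Q k).Finite :=
  (List.finite_length_eq (Fin M) k).subset fun _ hb => hb.2.1

lemma S11_exists_ext {M : ℕ} {T : Set (List (Fin M))} (hT : IsTree M T) :
    ∀ (d : ℕ) (Q : List (Fin M)), Q ∈ T → ∃ b ∈ T, b.length = Q.length + d ∧ Q <+: b := by
  intro d
  induction d with
  | zero => intro Q hQ; exact ⟨Q, hQ, rfl, List.prefix_refl Q⟩
  | succ d ih =>
    intro Q hQ
    obtain ⟨b, hb, hblen, hpre⟩ := ih Q hQ
    obtain ⟨a, ha⟩ := hT.2.2 b hb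
    exact ⟨b ++ [a], ha, by simp [hblen]; omega, hpre.trans ⟨[a], rfl⟩⟩

lemma S11desc_nonempty {M : ℕ} {T : Set (List (Fin M))} (hT : IsTree M T)
    {Q : List (Fin M)} {k : ℕ} (hQ : Q ∈ T) (hk : Q.length ≤ k) :
    (S11desc M T Q k).Nonempty := by
  obtain ⟨b, hb, hblen, hpre⟩ := S11_exists_ext hT (k - Q.length) Q hQ
  exact ⟨b, hb, by omega, hpre⟩

lemma S11desc_one_le {M : ℕ} {T : Set (List (Fin M))} (hT : IsTree M T)
    {Q : List (Fin M)} {k : ℕ} (hQ : Q ∈ T) (hk : Q.length ≤ k) :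
    1 ≤ (S11desc M T Q k).ncard :=
  (Set.ncard_pos (S11desc_finite M T Q k)).2 (S11desc_nonempty hT hQ hk)

lemma S11desc_mono {M : ℕ} {T : Set (List (Fin M))} {Q R : List (Fin M)} {k : ℕ}
    (h : Q <+: R) : (S11desc M T R k).ncard ≤ (S11desc M T Q k).ncard :=
  Set.ncard_le_ncard (fun b hb => ⟨hb.1, hb.2.1, h.trans hb.2.2⟩) (S11desc_finite M T Q k)

lemma S11_trans {M : ℕ} {T : Set (List (Fin M))} (Q Q' : List (Fin M)) {k : ℕ}
    (hnk : Q.length ≤ k) :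
    {w : List (Fin M) | Q ++ w ∈ T ∧ w.length = k - Q.length ∧ Q' <+: w}.ncard
      = (S11desc M T (Q ++ Q') k).ncard := by
  have himg : S11desc M T (Q ++ Q') k
      = (fun w => Q ++ w) '' {w : List (Fin M) | Q ++ w ∈ T ∧ w.length = k - Q.length ∧ Q' <+: w} := by
    ext b
    constructor
    · rintro ⟨hbT, hblen, u, hu⟩
      refine ⟨Q' ++ u, ⟨?_, ?_, ⟨u, rfl⟩⟩, ?_⟩
      · rw [← List.append_assoc, hu]; exact hbT
      · have := congrArg List.length hu
        simp [List.length_append] at this ⊢; omega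
      · show Q ++ (Q' ++ u) = b
        rw [← List.append_assoc, hu]
    · rintro ⟨w, ⟨hwT, hwlen, u, hu⟩, rfl⟩
      exact ⟨hwT, by simp [List.length_append, hwlen]; omega,
        ⟨u, by rw [List.append_assoc, hu]⟩⟩
  rw [himg, Set.ncard_image_of_injective _ (fun a b h => List.append_cancel_left h)]

lemma S11_trans_nil {M : ℕ} {T : Set (List (Fin M))} (Q : List (Fin M)) {k : ℕ}
    (hnk : Q.length ≤ k) :
    {w : List (Fin M) | Q ++ w ∈ T ∧ w.length = k - Q.length}.ncard
      = (S11desc M T Q k).ncard := by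
  have h1 : {w : List (Fin M) | Q ++ w ∈ T ∧ w.length = k - Q.length}
      = {w : List (Fin M) | Q ++ w ∈ T ∧ w.length = k - Q.length ∧ ([] : List (Fin M)) <+: w} := by
    ext w; simp [List.nil_prefix]
  rw [h1, S11_trans Q [] hnk, List.append_nil]

lemma S11_ncard_length_eq (M k : ℕ) :
    {l : List (Fin M) | l.length = k}.ncard = M ^ k := by
  rw [← Nat.card_coe_set_eq]
  have : Nat.card {l : List (Fin M) | l.length = k} = Nat.card (List.Vector (Fin M) k) := rfl
  rw [this, Nat.card_eq_fintype_card, card_vector, Fintype.card_fin]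
theorem S11key (M : ℕ) (T : Set (List (Fin M))) (hT : IsTree M T) (ρ t : ℝ)
    (hρ0 : 0 < ρ) (hρ1 : ρ < 1) (ht0 : 0 ≤ t) (ℓ k : ℕ)
    (H : ∀ n, ℓ ≤ n → ∀ Q ∈ T, Q.length = n → n + ℓ ≤ k →
      ∃ j ≤ ℓ, ∃ Q', (Q ++ Q' ∈ T) ∧ Q'.length = j ∧
        ((S11desc M T (Q ++ Q') k).ncard : ℝ)
          < ρ ^ (t * (j : ℝ)) * ((S11desc M T Q k).ncard : ℝ))
    (n : ℕ) (Q : List (Fin M)) (h1 : ℓ ≤ n) (h2 : n ≤ k) (hQ : Q ∈ T) (hlen : Q.length = n) :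
    ρ ^ (t * ((ℓ : ℝ) + (n : ℝ) - (k : ℝ))) ≤ ((S11desc M T Q k).ncard : ℝ) := by
  by_cases hc : n + ℓ ≤ k
  · obtain ⟨j, hj, Q', hQ'T, hQ'len, hlt⟩ := H n h1 Q hQ hlen hc
    have hj1 : 1 ≤ j := by
      by_contra h
      have hj0 : j = 0 := by omega
      subst hj0
      rw [List.length_eq_zero_iff] at hQ'len
      subst hQ'len
      rw [List.append_nil] at hlt
      simp at hlt
    have hrec := S11key M T hT ρ t hρ0 hρ1 ht0 ℓ k H (n + j) (Q ++ Q')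
      (by omega) (by omega) hQ'T (by simp [hlen, hQ'len])
    have hsplit : ρ ^ (t * ((ℓ : ℝ) + ((n : ℝ) + (j : ℝ)) - (k : ℝ)))
        = ρ ^ (t * (j : ℝ)) * ρ ^ (t * ((ℓ : ℝ) + (n : ℝ) - (k : ℝ))) := by
      rw [← Real.rpow_add hρ0]; ring_nf
    have hlt2 : ρ ^ (t * ((ℓ : ℝ) + ((n : ℝ) + (j : ℝ)) - (k : ℝ)))
        < ρ ^ (t * (j : ℝ)) * ((S11desc M T Q k).ncard : ℝ) := by
      refine lt_of_le_of_lt ?_ hlt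
      convert hrec using 3
      · rfl
      push_cast; ring
    rw [hsplit] at hlt2
    have hpos : 0 < ρ ^ (t * (j : ℝ)) := Real.rpow_pos_of_pos hρ0 _
    exact (mul_lt_mul_iff_right₀ hpos).mp hlt2 |>.le
  · have hexp : 0 ≤ t * ((ℓ : ℝ) + (n : ℝ) - (k : ℝ)) := by
      apply mul_nonneg ht0
      have : (k : ℝ) < (n : ℝ) + (ℓ : ℝ) := by exact_mod_cast (by omega : k < n + ℓ)
      linarith
    calc ρ ^ (t * ((ℓ : ℝ) + (n : ℝ) - (k : ℝ))) ≤ 1 :=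
          Real.rpow_le_one hρ0.le hρ1.le hexp
      _ ≤ ((S11desc M T Q k).ncard : ℝ) := by
          exact_mod_cast S11desc_one_le hT hQ (by omega)
termination_by k - n
decreasing_by simp_wf; omega
lemma S11_bddAbove (M : ℕ) (ρ : ℝ) (hρ : ρ ∈ Set.Ioo (0 : ℝ) 1)
    (T : Set (List (Fin M))) (hT : IsTree M T) :
    BddAbove {s : ℝ | 0 < s ∧ ∃ C : ℝ, 0 < C ∧ ∀ m k : ℕ, m ≤ k → ∀ a ∈ T, a.length = m →
      C * ρ ^ (((m : ℝ) - (k : ℝ)) * s) ≤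
        ({b | b ∈ T ∧ b.length = k ∧ a <+: b}.ncard : ℝ)} := by
  obtain ⟨a0, _⟩ := hT.2.2 [] hT.1
  have hM : 0 < M := a0.pos
  have hM1 : (1 : ℝ) ≤ (M : ℝ) := by exact_mod_cast hM
  refine ⟨Real.log M / Real.log ρ⁻¹, fun s hs => ?_⟩
  obtain ⟨hs0, C, hC, hb⟩ := hs
  have hkey : ∀ k : ℕ, C * (ρ ^ (-s)) ^ k ≤ (M : ℝ) ^ k := by
    intro k
    have h1 := hb 0 k (Nat.zero_le k) [] hT.1 rfl
    have h2 : ({b | b ∈ T ∧ b.length = k ∧ [] <+: b}.ncard : ℝ) ≤ (M : ℝ) ^ k := by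
      have hsub : ({b | b ∈ T ∧ b.length = k ∧ [] <+: b}).ncard
          ≤ {l : List (Fin M) | l.length = k}.ncard :=
        Set.ncard_le_ncard (fun b hb => hb.2.1) (List.finite_length_eq (Fin M) k)
      rw [S11_ncard_length_eq] at hsub
      exact_mod_cast hsub
    have h3 : C * (ρ ^ (-s)) ^ k = C * ρ ^ (((0 : ℝ) - (k : ℝ)) * s) := by
      rw [← Real.rpow_natCast (ρ ^ (-s)) k, ← Real.rpow_mul hρ.1.le]
      ring_nf
    rw [h3]
    push_cast at h1
    exact le_trans h1 h2
  have hρinv : 1 < ρ⁻¹ := (one_lt_inv₀ hρ.1).2 hρ.2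
  have hrM : ρ ^ (-s) ≤ (M : ℝ) := by
    by_contra hgt
    push_neg at hgt
    have hrpos : (0 : ℝ) < ρ ^ (-s) := Real.rpow_pos_of_pos hρ.1 _
    have hr : 1 < ρ ^ (-s) / M := (one_lt_div (by positivity)).2 hgt
    obtain ⟨k, hk⟩ := pow_unbounded_of_one_lt (1 / C) hr
    have hkk := hkey k
    have hle : (ρ ^ (-s) / M) ^ k ≤ 1 / C := by
      rw [div_pow, div_le_div_iff₀ (by positivity) hC]
      nlinarith
    exact absurd hle (not_le.2 hk)
  have hrw : (ρ⁻¹) ^ s = ρ ^ (-s) := by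
    rw [Real.rpow_neg hρ.1.le, ← Real.inv_rpow hρ.1.le]
  have hlog : Real.log ((ρ⁻¹) ^ s) ≤ Real.log M :=
    Real.log_le_log (by positivity) (by rw [hrw]; exact hrM)
  rw [Real.log_rpow (by positivity)] at hlog
  have hlρ : 0 < Real.log ρ⁻¹ := Real.log_pos hρinv
  exact (le_div_iff₀ hlρ).2 hlog
/-- The lower dimension of the boundary of a `(ρ, M)`-tree: the supremum of `s > 0`
such that, for some `C > 0`, every level-`m` node has at least `C ρ^{(m-k)s}` level-`k`
descendants, for all `m ≤ k`. -/
noncomputable def treeLowerDim (M : ℕ) (ρ : ℝ) (T : Set (List (Fin M))) : ℝ :=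
  sSup {s : ℝ | 0 < s ∧ ∃ C : ℝ, 0 < C ∧ ∀ m k : ℕ, m ≤ k → ∀ a ∈ T, a.length = m →
    C * ρ ^ (((m : ℝ) - (k : ℝ)) * s) ≤
      ({b | b ∈ T ∧ b.length = k ∧ a <+: b}.ncard : ℝ)}

/-- for any `t > dim_L ∂T` and `ℓ ∈ ℕ`, there are `n ≥ ℓ`, a level-`n`
node `Q ∈ T`, and `k ≥ n + ℓ`, such that for all `j ≤ ℓ` and all level-`j` nodes `Q'`
of the subtree rooted at `Q`, the proportion of level-`(k-n)` descendants of `Q` lying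
below `Q'` is at least `ρ^{tj}`. -/
theorem statement11 (M : ℕ) (ρ : ℝ) (hρ : ρ ∈ Set.Ioo (0 : ℝ) 1)
    (T : Set (List (Fin M))) (hT : IsTree M T) (t : ℝ) (ht : treeLowerDim M ρ T < t)
    (ℓ : ℕ) (hℓ : 1 ≤ ℓ) :
    ∃ n : ℕ, ℓ ≤ n ∧ ∃ Q ∈ T, Q.length = n ∧ ∃ k : ℕ, n + ℓ ≤ k ∧
      ∀ j ≤ ℓ, ∀ Q' : List (Fin M), Q ++ Q' ∈ T → Q'.length = j →
        ρ ^ (t * (j : ℝ)) ≤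
          ({w | Q ++ w ∈ T ∧ w.length = k - n ∧ Q' <+: w}.ncard : ℝ) /
            ({w | Q ++ w ∈ T ∧ w.length = k - n}.ncard : ℝ) := by
  have hBdd := S11_bddAbove M ρ hρ T hT
  have hd0 : 0 ≤ treeLowerDim M ρ T := Real.sSup_nonneg fun x hx => hx.1.le
  have ht0 : 0 < t := lt_of_le_of_lt hd0 ht
  by_contra hcon
  push_neg at hcon
  have H : ∀ k : ℕ, ∀ n, ℓ ≤ n → ∀ Q ∈ T, Q.length = n → n + ℓ ≤ k →
      ∃ j ≤ ℓ, ∃ Q', (Q ++ Q' ∈ T) ∧ Q'.length = j ∧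
        ((S11desc M T (Q ++ Q') k).ncard : ℝ)
          < ρ ^ (t * (j : ℝ)) * ((S11desc M T Q k).ncard : ℝ) := by
    intro k n hn Q hQ hQlen hnk
    obtain ⟨j, hj, Q', hQ'T, hQ'len, hratio⟩ := hcon n hn Q hQ hQlen k hnk
    refine ⟨j, hj, Q', hQ'T, hQ'len, ?_⟩
    have hQk : Q.length ≤ k := by omega
    have hden1 : 1 ≤ (S11desc M T Q k).ncard := S11desc_one_le hT hQ hQk
    have hdenR : (0 : ℝ) < ((S11desc M T Q k).ncard : ℝ) := by
      have : (0:ℕ) < (S11desc M T Q k).ncard := hden1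
      exact_mod_cast this
    rw [← hQlen] at hratio
    rw [S11_trans Q Q' hQk, S11_trans_nil Q hQk, div_lt_iff₀ hdenR] at hratio
    exact hratio
  have hmem : t ∈ {s : ℝ | 0 < s ∧ ∃ C : ℝ, 0 < C ∧ ∀ m k : ℕ, m ≤ k → ∀ a ∈ T,
      a.length = m → C * ρ ^ (((m : ℝ) - (k : ℝ)) * s) ≤
        ({b | b ∈ T ∧ b.length = k ∧ a <+: b}.ncard : ℝ)} := by
    refine ⟨ht0, ρ ^ (t * (2 * (ℓ : ℝ))), Real.rpow_pos_of_pos hρ.1 _, ?_⟩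
    intro m k hmk a ha halen
    show ρ ^ (t * (2 * (ℓ : ℝ))) * ρ ^ (((m : ℝ) - (k : ℝ)) * t)
        ≤ ((S11desc M T a k).ncard : ℝ)
    rcases le_or_gt ℓ m with hml | hml
    · have hk := S11key M T hT ρ t hρ.1 hρ.2 ht0.le ℓ k (H k) m a hml hmk ha halen
      refine le_trans ?_ hk
      rw [← Real.rpow_add hρ.1]
      apply Real.rpow_le_rpow_of_exponent_ge hρ.1 hρ.2.le
      nlinarith [mul_nonneg ht0.le (Nat.cast_nonneg ℓ : (0:ℝ) ≤ (ℓ:ℝ))]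
    · rcases le_or_gt ℓ k with hkℓ | hkℓ
      · obtain ⟨b, hbT, hblen, hab⟩ := S11_exists_ext hT (ℓ - m) a ha
        have hblℓ : b.length = ℓ := by rw [hblen, halen]; omega
        have hk := S11key M T hT ρ t hρ.1 hρ.2 ht0.le ℓ k (H k) ℓ b le_rfl hkℓ hbT hblℓ
        have hmono : ((S11desc M T b k).ncard : ℝ) ≤ ((S11desc M T a k).ncard : ℝ) := by
          exact_mod_cast S11desc_mono (T := T) (k := k) hab
        refine le_trans (le_trans ?_ hk) hmono
        rw [← Real.rpow_add hρ.1]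
        apply Real.rpow_le_rpow_of_exponent_ge hρ.1 hρ.2.le
        nlinarith [mul_nonneg ht0.le (Nat.cast_nonneg m : (0:ℝ) ≤ (m:ℝ))]
      · have h1 : (1 : ℝ) ≤ ((S11desc M T a k).ncard : ℝ) := by
          have := S11desc_one_le hT ha (by omega : a.length ≤ k)
          exact_mod_cast this
        refine le_trans ?_ h1
        rw [← Real.rpow_add hρ.1]
        apply Real.rpow_le_one hρ.1.le hρ.2.le
        have hkr : (k : ℝ) < (ℓ : ℝ) := by exact_mod_cast hkℓ
        nlinarith [mul_nonneg ht0.le (Nat.cast_nonneg m : (0:ℝ) ≤ (m:ℝ)),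
          mul_nonneg ht0.le (by linarith : (0:ℝ) ≤ (ℓ:ℝ) - (k:ℝ))]
  exact absurd ht (not_lt.2 (le_csSup hBdd hmem))
end

section
/- Let a ∈ {0,1}^ℕ and ρ ∈ (0, 1/2], and let K_ρ(a) ⊂ ℝ^d be the associated uniformly branching (homogeneous Moran) set. Then the Assouad dimension of K_ρ(a) equals (d·log 2 / log(1/ρ)) · limsup_{n→∞} sup_{k≥0} (a_{k+1} + ... + a_{k+n})/n. -/
open Metric Filter
open scoped ENNReal

/-- The Assouad dimension of a set. -/
noncomputable def assouadDim {X : Type*} [MetricSpace X] (K : Set X) : ℝ :=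
  sInf {α : ℝ | 0 < α ∧ ∃ C : ℝ, 0 < C ∧ ∀ r R : ℝ, 0 < r → r ≤ R → R < 1 → ∀ x ∈ K,
    (coverNum r (closedBall x R ∩ K) : ℝ≥0∞) ≤ ENNReal.ofReal (C * (R / r) ^ α)}

/-- The uniformly branching (homogeneous Moran) set `K_ρ(a)` with contraction ratio `ρ`
and branching sequence `a` (indexed from 1): at step `n+1` each construction cube of side
`ρⁿ` is replaced by a single corner sub-cube of side `ρ^{n+1}` if `a (n+1) = 0`, and by
all `2^d` corner sub-cubes if `a (n+1) = 1`.  Its points are exactly the sums of corner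
offsets `0` or `ρⁿ - ρ^{n+1}` in each coordinate, with the offset forced to `0` at
non-branching steps. -/
def moran (d : ℕ) (ρ : ℝ) (a : ℕ → ℕ) : Set (EuclideanSpace ℝ (Fin d)) :=
  {x | ∃ ε : ℕ → Fin d → Bool, (∀ n j, a (n + 1) = 0 → ε n j = false) ∧
    ∀ j, x j = ∑' n : ℕ, (if ε n j then ρ ^ n - ρ ^ (n + 1) else 0)}

namespace S15

set_option linter.unusedSectionVars false
set_option linter.unusedVariables false
set_option linter.dupNamespace false

/-- one-dimensional digit value -/
noncomputable def val (ρ : ℝ) (e : ℕ → Bool) : ℝ :=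
  ∑' n, if e n then ρ ^ n - ρ ^ (n + 1) else 0

section OneD
variable {ρ : ℝ} (hρ0 : 0 < ρ) (hρ : ρ ≤ 1 / 2)
include hρ0 hρ

omit hρ0 in
lemma rho_lt_one : ρ < 1 := lt_of_le_of_lt hρ (by norm_num)

lemma term_nonneg (e : ℕ → Bool) (n : ℕ) :
    0 ≤ (if e n then ρ ^ n - ρ ^ (n + 1) else 0) := by
  have h1 : ρ < 1 := rho_lt_one hρ
  split_ifs
  · have h2 : ρ ^ (n + 1) ≤ ρ ^ n := by
      simpa using pow_le_pow_of_le_one hρ0.le h1.le (Nat.le_succ n)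
    linarith
  · exact le_refl 0

lemma term_le (e : ℕ → Bool) (n : ℕ) :
    (if e n then ρ ^ n - ρ ^ (n + 1) else 0) ≤ ρ ^ n - ρ ^ (n + 1) := by
  have h1 : ρ < 1 := rho_lt_one hρ
  split_ifs
  · exact le_refl _
  · have h2 : ρ ^ (n + 1) ≤ ρ ^ n := by
      simpa using pow_le_pow_of_le_one hρ0.le h1.le (Nat.le_succ n)
    linarith

lemma summable_tele : Summable (fun n : ℕ => ρ ^ n - ρ ^ (n + 1)) := by
  have h1 : ρ < 1 := rho_lt_one hρ
  have := summable_geometric_of_lt_one hρ0.le h1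
  exact this.sub (by simpa [pow_succ] using this.mul_right ρ)

lemma summable_val (e : ℕ → Bool) :
    Summable (fun n => if e n then ρ ^ n - ρ ^ (n + 1) else 0) :=
  Summable.of_nonneg_of_le (term_nonneg hρ0 hρ e) (term_le hρ0 hρ e) (summable_tele hρ0 hρ)

lemma tsum_tele (N : ℕ) : ∑' n : ℕ, (ρ ^ (n + N) - ρ ^ (n + N + 1)) = ρ ^ N := by
  have h1 : ρ < 1 := rho_lt_one hρ
  have heq : ∀ n : ℕ, ρ ^ (n + N) - ρ ^ (n + N + 1) = ρ ^ n * (ρ ^ N - ρ ^ (N + 1)) := by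
    intro n; rw [pow_add, pow_succ, pow_add, mul_sub, pow_succ]; ring
  rw [tsum_congr heq, tsum_mul_right, tsum_geometric_of_lt_one hρ0.le h1]
  have h2 : (1 : ℝ) - ρ ≠ 0 := by linarith
  rw [pow_succ]
  field_simp

lemma tail_nonneg (e : ℕ → Bool) (N : ℕ) :
    0 ≤ ∑' n : ℕ, (if e (n + N) then ρ ^ (n + N) - ρ ^ (n + N + 1) else 0) :=
  tsum_nonneg fun n => term_nonneg hρ0 hρ e (n + N)

lemma tail_le (e : ℕ → Bool) (N : ℕ) :
    ∑' n : ℕ, (if e (n + N) then ρ ^ (n + N) - ρ ^ (n + N + 1) else 0) ≤ ρ ^ N := by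
  rw [← tsum_tele hρ0 hρ N]
  exact Summable.tsum_le_tsum (fun n => term_le hρ0 hρ e (n + N))
    ((summable_val hρ0 hρ e).comp_injective (add_left_injective N))
    ((summable_tele hρ0 hρ).comp_injective (add_left_injective N))

lemma val_split (e : ℕ → Bool) (N : ℕ) :
    val ρ e = (∑ n ∈ Finset.range N, if e n then ρ ^ n - ρ ^ (n + 1) else 0)
      + ∑' n : ℕ, (if e (n + N) then ρ ^ (n + N) - ρ ^ (n + N + 1) else 0) :=
  (Summable.sum_add_tsum_nat_add N (summable_val hρ0 hρ e)).symm

lemma val_nonneg (e : ℕ → Bool) : 0 ≤ val ρ e :=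
  tsum_nonneg fun n => term_nonneg hρ0 hρ e n

lemma val_le_one (e : ℕ → Bool) : val ρ e ≤ 1 := by
  have := tail_le hρ0 hρ e 0
  simpa [val] using this

/-- agreement below `N` gives closeness -/
lemma val_agree (e f : ℕ → Bool) (N : ℕ) (h : ∀ n < N, e n = f n) :
    |val ρ e - val ρ f| ≤ ρ ^ N := by
  rw [val_split hρ0 hρ e N, val_split hρ0 hρ f N]
  have hsum : (∑ n ∈ Finset.range N, if e n then ρ ^ n - ρ ^ (n + 1) else 0)
      = ∑ n ∈ Finset.range N, if f n then ρ ^ n - ρ ^ (n + 1) else 0 :=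
    Finset.sum_congr rfl fun n hn => by rw [h n (Finset.mem_range.1 hn)]
  rw [hsum]
  have h1 := tail_nonneg hρ0 hρ e N
  have h2 := tail_le hρ0 hρ e N
  have h3 := tail_nonneg hρ0 hρ f N
  have h4 := tail_le hρ0 hρ f N
  rw [abs_le]
  constructor <;> [linarith; linarith]

/-- zero tail gives finite sum -/
lemma val_finite (e : ℕ → Bool) (N : ℕ) (h : ∀ n, N ≤ n → e n = false) :
    val ρ e = ∑ n ∈ Finset.range N, if e n then ρ ^ n - ρ ^ (n + 1) else 0 := by
  rw [val_split hρ0 hρ e N]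
  have hz : ∀ n : ℕ, (if e (n + N) then ρ ^ (n + N) - ρ ^ (n + N + 1) else 0) = 0 := by
    intro n; rw [h (n + N) (Nat.le_add_left _ _)]; simp
  rw [tsum_congr hz]; simp

omit hρ0 hρ in
lemma sum_tele_Ico {a b : ℕ} (hab : a ≤ b) :
    ∑ n ∈ Finset.Ico a b, (ρ ^ n - ρ ^ (n + 1)) = ρ ^ a - ρ ^ b := by
  induction b, hab using Nat.le_induction with
  | base => simp
  | succ b hb ih => rw [Finset.sum_Ico_succ_top hb, ih]; ring

/-- separation: distinct digit strings with support below `N` give values `ρ^N` apart. -/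
lemma val_sep (e f : ℕ → Bool) (N : ℕ) (he : ∀ n, N ≤ n → e n = false)
    (hf : ∀ n, N ≤ n → f n = false) (hne : e ≠ f) :
    ρ ^ N ≤ |val ρ e - val ρ f| := by
  have hex : ∃ t, e t ≠ f t := by
    by_contra hc; push_neg at hc; exact hne (funext hc)
  classical
  set t := Nat.find hex with ht
  have htne : e t ≠ f t := Nat.find_spec hex
  have htmin : ∀ n < t, e n = f n := fun n hn => by
    by_contra hc; exact absurd (Nat.find_le hc) (not_le.2 hn)
  have htN : t < N := by
    by_contra hc; push_neg at hc
    rw [he t hc, hf t hc] at htne; exact htne rfl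
  rw [val_finite hρ0 hρ e N he, val_finite hρ0 hρ f N hf]
  have hsplit : ∀ g : ℕ → Bool, ∑ n ∈ Finset.range N, (if g n then ρ ^ n - ρ ^ (n + 1) else 0)
      = (∑ n ∈ Finset.range t, if g n then ρ ^ n - ρ ^ (n + 1) else 0)
        + ((if g t then ρ ^ t - ρ ^ (t + 1) else 0)
        + ∑ n ∈ Finset.Ico (t + 1) N, (if g n then ρ ^ n - ρ ^ (n + 1) else 0)) := by
    intro g
    have ht1 : t + 1 ≤ N := htN
    calc ∑ n ∈ Finset.range N, (if g n then ρ ^ n - ρ ^ (n + 1) else 0)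
        = (∑ n ∈ Finset.Ico 0 (t + 1), if g n then ρ ^ n - ρ ^ (n + 1) else 0)
          + ∑ n ∈ Finset.Ico (t + 1) N, (if g n then ρ ^ n - ρ ^ (n + 1) else 0) := by
          rw [Finset.sum_Ico_consecutive _ (Nat.zero_le _) ht1, Finset.range_eq_Ico]
      _ = _ := by
          rw [← Finset.range_eq_Ico, Finset.sum_range_succ]
          ring
  rw [hsplit e, hsplit f]
  have heqlow : (∑ n ∈ Finset.range t, if e n then ρ ^ n - ρ ^ (n + 1) else 0)
      = ∑ n ∈ Finset.range t, if f n then ρ ^ n - ρ ^ (n + 1) else 0 :=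
    Finset.sum_congr rfl fun n hn => by rw [htmin n (Finset.mem_range.1 hn)]
  rw [heqlow]
  set A := ∑ n ∈ Finset.range t, if f n then ρ ^ n - ρ ^ (n + 1) else 0
  set se := ∑ n ∈ Finset.Ico (t + 1) N, (if e n then ρ ^ n - ρ ^ (n + 1) else 0) with hse
  set sf := ∑ n ∈ Finset.Ico (t + 1) N, (if f n then ρ ^ n - ρ ^ (n + 1) else 0) with hsf
  have hb : ∀ g : ℕ → Bool,
      (0 ≤ ∑ n ∈ Finset.Ico (t + 1) N, (if g n then ρ ^ n - ρ ^ (n + 1) else 0)) ∧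
      (∑ n ∈ Finset.Ico (t + 1) N, (if g n then ρ ^ n - ρ ^ (n + 1) else 0))
        ≤ ρ ^ (t + 1) - ρ ^ N := by
    intro g
    refine ⟨Finset.sum_nonneg fun n _ => term_nonneg hρ0 hρ g n, ?_⟩
    calc ∑ n ∈ Finset.Ico (t + 1) N, (if g n then ρ ^ n - ρ ^ (n + 1) else 0)
        ≤ ∑ n ∈ Finset.Ico (t + 1) N, (ρ ^ n - ρ ^ (n + 1)) :=
          Finset.sum_le_sum fun n _ => term_le hρ0 hρ g n
      _ = ρ ^ (t + 1) - ρ ^ N := sum_tele_Ico htN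
  obtain ⟨he0, he1⟩ := hb e
  obtain ⟨hf0, hf1⟩ := hb f
  rw [← hse] at he0 he1
  rw [← hsf] at hf0 hf1
  have hρt : 0 < ρ ^ t := pow_pos hρ0 t
  have hkey : ρ ^ t - ρ ^ (t + 1) - (ρ ^ (t + 1) - ρ ^ N) ≥ ρ ^ N := by
    have hpow : ρ ^ (t + 1) = ρ ^ t * ρ := pow_succ ρ t
    nlinarith
  rcases Bool.eq_false_or_eq_true (e t) with het | het <;>
    rcases Bool.eq_false_or_eq_true (f t) with hft | hft
  case _ => rw [het, hft] at htne; exact absurd rfl htne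
  case _ =>
    have g1 : (if e t = true then ρ ^ t - ρ ^ (t + 1) else 0) = ρ ^ t - ρ ^ (t + 1) := by
      rw [het]; simp
    have g2 : (if f t = true then ρ ^ t - ρ ^ (t + 1) else 0) = 0 := by rw [hft]; simp
    rw [g1, g2]
    refine le_abs.2 (Or.inl ?_)
    linarith
  case _ =>
    have g1 : (if e t = true then ρ ^ t - ρ ^ (t + 1) else 0) = 0 := by rw [het]; simp
    have g2 : (if f t = true then ρ ^ t - ρ ^ (t + 1) else 0) = ρ ^ t - ρ ^ (t + 1) := by
      rw [hft]; simp
    rw [g1, g2]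
    refine le_abs.2 (Or.inr ?_)
    linarith
  case _ => rw [het, hft] at htne; exact absurd rfl htne

end OneD

section MultiD
variable {d : ℕ} {ρ : ℝ} {a : ℕ → ℕ}

noncomputable def pt (d : ℕ) (ρ : ℝ) (ε : ℕ → Fin d → Bool) : EuclideanSpace ℝ (Fin d) :=
  WithLp.toLp 2 (fun j => val ρ (fun n => ε n j))

def Adm (a : ℕ → ℕ) (d : ℕ) (ε : ℕ → Fin d → Bool) : Prop :=
  ∀ n j, a (n + 1) = 0 → ε n j = false

lemma mem_moran_iff {x : EuclideanSpace ℝ (Fin d)} :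
    x ∈ moran d ρ a ↔ ∃ ε, Adm a d ε ∧ x = pt d ρ ε := by
  constructor
  · rintro ⟨ε, h1, h2⟩
    exact ⟨ε, h1, WithLp.ofLp_injective 2 (funext fun j => h2 j)⟩
  · rintro ⟨ε, h1, rfl⟩
    exact ⟨ε, h1, fun j => rfl⟩

lemma pt_mem_moran (ε : ℕ → Fin d → Bool) (hε : Adm a d ε) : pt d ρ ε ∈ moran d ρ a :=
  mem_moran_iff.2 ⟨ε, hε, rfl⟩

lemma dist_coord_le (x y : EuclideanSpace ℝ (Fin d)) (j : Fin d) :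
    |x j - y j| ≤ dist x y := by
  rw [EuclideanSpace.dist_eq, ← Real.sqrt_sq_eq_abs]
  refine Real.sqrt_le_sqrt ?_
  have hh : (x j - y j) ^ 2 = dist (x j) (y j) ^ 2 := by rw [Real.dist_eq, sq_abs]
  rw [hh]
  exact Finset.single_le_sum (f := fun i => dist (x i) (y i) ^ 2)
    (fun i _ => sq_nonneg _) (Finset.mem_univ j)

variable (hρ0 : 0 < ρ) (hρ : ρ ≤ 1 / 2)
include hρ0 hρ

lemma dist_le_of_agree (ε η : ℕ → Fin d → Bool) (N : ℕ)
    (h : ∀ n < N, ∀ j, ε n j = η n j) :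
    dist (pt d ρ ε) (pt d ρ η) ≤ Real.sqrt d * ρ ^ N := by
  rw [EuclideanSpace.dist_eq]
  have hb : ∀ j : Fin d, dist (pt d ρ ε j) (pt d ρ η j) ^ 2 ≤ (ρ ^ N) ^ 2 := by
    intro j
    have h1 : dist (pt d ρ ε j) (pt d ρ η j) ≤ ρ ^ N := by
      rw [Real.dist_eq]
      exact val_agree hρ0 hρ _ _ N (fun n hn => h n hn j)
    exact pow_le_pow_left₀ dist_nonneg h1 2
  calc Real.sqrt (∑ j, dist (pt d ρ ε j) (pt d ρ η j) ^ 2)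
      ≤ Real.sqrt (∑ _j : Fin d, (ρ ^ N) ^ 2) :=
        Real.sqrt_le_sqrt (Finset.sum_le_sum fun j _ => hb j)
    _ = Real.sqrt d * ρ ^ N := by
        rw [Finset.sum_const, Finset.card_univ, Fintype.card_fin, nsmul_eq_mul,
          Real.sqrt_mul (by positivity), Real.sqrt_sq (by positivity)]

lemma exists_coord_sep (ε η : ℕ → Fin d → Bool) (N : ℕ)
    (he : ∀ n, N ≤ n → ∀ j, ε n j = false) (hf : ∀ n, N ≤ n → ∀ j, η n j = false)
    (hne : ε ≠ η) : ∃ j, ρ ^ N ≤ |pt d ρ ε j - pt d ρ η j| := by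
  have hex : ∃ j, (fun n => ε n j) ≠ (fun n => η n j) := by
    by_contra hc; push_neg at hc
    exact hne (by funext n j; exact congrFun (hc j) n)
  obtain ⟨j, hj⟩ := hex
  exact ⟨j, val_sep hρ0 hρ _ _ N (fun n hn => he n hn j) (fun n hn => hf n hn j) hj⟩

lemma dist_sep (ε η : ℕ → Fin d → Bool) (N : ℕ)
    (he : ∀ n, N ≤ n → ∀ j, ε n j = false) (hf : ∀ n, N ≤ n → ∀ j, η n j = false)
    (hne : ε ≠ η) :
    ρ ^ N ≤ dist (pt d ρ ε) (pt d ρ η) := by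
  obtain ⟨j, hj⟩ := exists_coord_sep hρ0 hρ ε η N he hf hne
  calc ρ ^ N ≤ |pt d ρ ε j - pt d ρ η j| := hj
    _ ≤ dist (pt d ρ ε) (pt d ρ η) := dist_coord_le _ _ j

end MultiD

section Counting
variable {d : ℕ} {a : ℕ → ℕ}

lemma card_adm (ha : ∀ n, a n = 0 ∨ a n = 1) (d m L : ℕ) :
    Fintype.card {τ : Fin L → Fin d → Bool //
        ∀ (i : Fin L) (j : Fin d), a (m + ↑i + 1) = 0 → τ i j = false}
      = 2 ^ (d * ∑ i ∈ Finset.range L, a (m + i + 1)) := by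
  classical
  have e1 : {τ : Fin L → Fin d → Bool //
        ∀ (i : Fin L) (j : Fin d), a (m + ↑i + 1) = 0 → τ i j = false}
      ≃ ∀ i : Fin L, {g : Fin d → Bool // ∀ j, a (m + ↑i + 1) = 0 → g j = false} :=
    Equiv.subtypePiEquivPi (p := fun (i : Fin L) (g : Fin d → Bool) =>
      ∀ j, a (m + ↑i + 1) = 0 → g j = false)
  rw [Fintype.card_congr e1, Fintype.card_pi]
  have hcard : ∀ i : Fin L,
      Fintype.card {g : Fin d → Bool // ∀ j, a (m + ↑i + 1) = 0 → g j = false}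
        = (2 ^ d) ^ (a (m + ↑i + 1)) := by
    intro i
    rcases ha (m + ↑i + 1) with h | h
    · have hc : Fintype.card {g : Fin d → Bool // ∀ j, a (m + ↑i + 1) = 0 → g j = false}
          = 1 := by
        refine Fintype.card_eq_one_iff.2 ⟨⟨fun _ => false, fun j _ => rfl⟩, ?_⟩
        rintro ⟨g, hg⟩
        exact Subtype.ext (funext fun j => hg j h)
      rw [hc, h, pow_zero]
    · have hc : Fintype.card {g : Fin d → Bool // ∀ j, a (m + ↑i + 1) = 0 → g j = false}
          = Fintype.card (Fin d → Bool) := by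
        refine Fintype.card_congr (Equiv.subtypeUnivEquiv fun g j hj => ?_)
        rw [h] at hj; exact absurd hj one_ne_zero
      rw [hc, h, pow_one, Fintype.card_fun]
      simp
  calc ∏ i : Fin L, Fintype.card {g : Fin d → Bool // ∀ j, a (m + ↑i + 1) = 0 → g j = false}
      = ∏ i : Fin L, (2 ^ d) ^ (a (m + ↑i + 1)) := Finset.prod_congr rfl fun i _ => hcard i
    _ = (2 ^ d) ^ (∑ i : Fin L, a (m + ↑i + 1)) := by
        rw [Finset.prod_pow_eq_pow_sum]
    _ = 2 ^ (d * ∑ i ∈ Finset.range L, a (m + i + 1)) := by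
        rw [← pow_mul, Fin.sum_univ_eq_sum_range (fun i => a (m + i + 1)) L]

/-- binning: separated points in a box have bounded cardinality -/
lemma binning {β : Type*} (P : Finset β) (c : β → Fin d → ℝ) (x0 : Fin d → ℝ)
    (Λ s : ℝ) (hs : 0 < s) (hΛ : 0 ≤ Λ) (Bd : ℕ) (hΛB : 2 * Λ / s ≤ (Bd : ℝ))
    (hin : ∀ h ∈ P, ∀ j, |c h j - x0 j| ≤ Λ)
    (hsep : ∀ h ∈ P, ∀ h' ∈ P, h ≠ h' → ∃ j, s ≤ |c h j - c h' j|) :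
    P.card ≤ (Bd + 1) ^ d := by
  classical
  set t : Finset (Fin d → ℕ) := Fintype.piFinset (fun _ : Fin d => Finset.range (Bd + 1)) with ht
  have hcard_t : t.card = (Bd + 1) ^ d := by
    rw [ht, Fintype.card_piFinset]
    simp
  refine le_trans (Finset.card_le_card_of_injOn
    (fun h j => ⌊(c h j - x0 j + Λ) / s⌋₊) ?_ ?_) (le_of_eq hcard_t)
  · intro h hh
    refine Fintype.mem_piFinset.2 fun j => Finset.mem_range.2 ?_
    have h1 : (c h j - x0 j + Λ) / s ≤ 2 * Λ / s := by
      refine (div_le_div_iff_of_pos_right hs).2 ?_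
      have := (abs_le.1 (hin h hh j)).2
      linarith
    have h2 : ⌊(c h j - x0 j + Λ) / s⌋₊ ≤ Bd := by
      calc ⌊(c h j - x0 j + Λ) / s⌋₊ ≤ ⌊(Bd : ℝ)⌋₊ := Nat.floor_mono (le_trans h1 hΛB)
        _ = Bd := Nat.floor_natCast Bd
    exact Nat.lt_succ_of_le h2
  · intro h hh h' hh' heq
    by_contra hne
    obtain ⟨j, hj⟩ := hsep h hh h' hh' hne
    have hfl : ⌊(c h j - x0 j + Λ) / s⌋₊ = ⌊(c h' j - x0 j + Λ) / s⌋₊ := congrFun heq j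
    set u := (c h j - x0 j + Λ) / s with hu
    set v := (c h' j - x0 j + Λ) / s with hv
    have hu0 : 0 ≤ u := by
      apply div_nonneg ?_ hs.le
      have := (abs_le.1 (hin h hh j)).1
      linarith
    have hv0 : 0 ≤ v := by
      apply div_nonneg ?_ hs.le
      have := (abs_le.1 (hin h' hh' j)).1
      linarith
    have h1 : u < ⌊u⌋₊ + 1 := Nat.lt_floor_add_one u
    have h2 : (⌊u⌋₊ : ℝ) ≤ u := Nat.floor_le hu0
    have h3 : v < ⌊v⌋₊ + 1 := Nat.lt_floor_add_one v
    have h4 : (⌊v⌋₊ : ℝ) ≤ v := Nat.floor_le hv0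
    rw [hfl] at h1 h2
    have habs : |u - v| < 1 := abs_lt.2 ⟨by linarith, by linarith⟩
    have hcc : c h j - c h' j = (u - v) * s := by
      rw [hu, hv]
      field_simp
      ring
    have : |c h j - c h' j| < s := by
      rw [hcc, abs_mul, abs_of_pos hs]
      nlinarith [abs_nonneg (u - v)]
    linarith

end Counting

section Cover
variable {X : Type*} [MetricSpace X] {r : ℝ} {F : Set X}

lemma coverNum_le_card (S : Finset X) (h1 : ↑S ⊆ F) (h2 : F ⊆ ⋃ x ∈ S, closedBall x r) :
    coverNum r F ≤ (S.card : ℕ∞) :=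
  sInf_le ⟨S, ⟨h1, h2⟩, rfl⟩

lemma card_le_coverNum (hr : 0 ≤ r) (T : Finset X) (hT : ↑T ⊆ F)
    (hsep : ∀ x ∈ T, ∀ y ∈ T, x ≠ y → 2 * r < dist x y) :
    (T.card : ℕ∞) ≤ coverNum r F := by
  classical
  refine le_sInf ?_
  rintro m ⟨S, ⟨hS1, hS2⟩, rfl⟩
  have key : ∀ x ∈ T, ∃ s ∈ S, dist x s ≤ r := by
    intro x hx
    have := hS2 (hT hx)
    simp only [Set.mem_iUnion, mem_closedBall] at this
    obtain ⟨s, hs, hds⟩ := this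
    exact ⟨s, hs, hds⟩
  have hinj : ∀ (x : X) (hx : x ∈ T) (y : X) (hy : y ∈ T),
      (key x hx).choose = (key y hy).choose → x = y := by
    intro x hx y hy hxy
    by_contra hne
    obtain ⟨hsx, hdx⟩ := (key x hx).choose_spec
    obtain ⟨hsy, hdy⟩ := (key y hy).choose_spec
    have := hsep x hx y hy hne
    have htri : dist x y ≤ dist x (key x hx).choose + dist y (key y hy).choose := by
      rw [hxy]
      exact dist_triangle_right x y _
    linarith
  have : T.card ≤ S.card := by
    refine Finset.card_le_card_of_injOn (fun x => if hx : x ∈ T then (key x hx).choose else x)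
      ?_ ?_
    · intro x hx
      dsimp only
      rw [dif_pos (Finset.mem_coe.1 hx)]
      exact (key x hx).choose_spec.1
    · intro x hx y hy hxy
      simp only [Finset.mem_coe] at hx hy
      simp only [hx, hy, dif_pos] at hxy
      exact hinj x hx y hy hxy
  show (T.card : ℕ∞) ≤ (S.card : ℕ∞)
  exact_mod_cast this

end Cover



noncomputable def fS (a : ℕ → ℕ) : ℕ → ℝ :=
  fun n : ℕ => ⨆ k : ℕ, (∑ i ∈ Finset.Ico k (k + n), (a (i + 1) : ℝ)) / n

def Sn (a : ℕ → ℕ) (m L : ℕ) : ℕ := ∑ i ∈ Finset.range L, a (m + i + 1)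

section Win
variable {a : ℕ → ℕ} (ha : ∀ n, a n = 0 ∨ a n = 1)

lemma W_eq_Sn (k n : ℕ) :
    (∑ i ∈ Finset.Ico k (k + n), (a (i + 1) : ℝ)) = (Sn a k n : ℝ) := by
  rw [Sn, Finset.sum_Ico_eq_sum_range]
  push_cast
  simp

include ha

lemma Sn_le (m L : ℕ) : Sn a m L ≤ L := by
  calc Sn a m L ≤ ∑ _i ∈ Finset.range L, 1 :=
        Finset.sum_le_sum fun i _ => by rcases ha (m + i + 1) with h | h <;> omega
    _ = L := by simp

lemma Sn_split (m c L : ℕ) (hc : c ≤ L) :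
    Sn a m L = Sn a m c + Sn a (m + c) (L - c) := by
  rw [Sn, Sn, Sn, Finset.range_eq_Ico, ← Finset.sum_Ico_consecutive _ (Nat.zero_le c) hc,
    ← Finset.range_eq_Ico]
  congr 1
  rw [Finset.sum_Ico_eq_sum_range]
  refine Finset.sum_congr rfl fun i _ => by ring_nf

lemma bddAbove_win (n : ℕ) :
    BddAbove (Set.range fun k => (∑ i ∈ Finset.Ico k (k + n), (a (i + 1) : ℝ)) / n) := by
  refine ⟨1, ?_⟩
  rintro y ⟨k, rfl⟩
  dsimp only
  rcases Nat.eq_zero_or_pos n with rfl | hn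
  · simp
  · rw [W_eq_Sn, div_le_one (by positivity)]
    exact_mod_cast Nat.cast_le.2 (Sn_le ha k n)

lemma fS_nonneg (n : ℕ) : 0 ≤ fS a n := by
  refine le_trans ?_ (le_ciSup (bddAbove_win ha n) 0)
  positivity

lemma fS_le_one (n : ℕ) : fS a n ≤ 1 := by
  refine ciSup_le fun k => ?_
  rcases Nat.eq_zero_or_pos n with rfl | hn
  · simp
  · rw [div_le_one (by positivity), W_eq_Sn]
    exact_mod_cast Nat.cast_le.2 (Sn_le ha k n)

lemma win_le_fS (m n : ℕ) (hn : 0 < n) : (Sn a m n : ℝ) / n ≤ fS a n := by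
  have := le_ciSup (bddAbove_win ha n) m
  rwa [W_eq_Sn] at this

lemma bdd_le : IsBoundedUnder (· ≤ ·) atTop (fS a) :=
  isBoundedUnder_of ⟨1, fun n => fS_le_one ha n⟩

lemma bdd_ge : IsBoundedUnder (· ≥ ·) atTop (fS a) :=
  isBoundedUnder_of ⟨0, fun n => fS_nonneg ha n⟩

lemma theta_nonneg : 0 ≤ atTop.limsup (fS a) := by
  refine le_limsup_of_frequently_le (Frequently.of_forall fun n => fS_nonneg ha n) (bdd_le ha)

end Win

/-- realized digit prefixes of length `t` among points of `K` within `R` of `x` -/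
noncomputable def rlzF (d : ℕ) (ρ : ℝ) (a : ℕ → ℕ) (x : EuclideanSpace ℝ (Fin d)) (R : ℝ)
    (t : ℕ) : Finset (Fin t → Fin d → Bool) :=
  @Finset.filter _ (fun τ => ∃ ε, Adm a d ε ∧ pt d ρ ε ∈ closedBall x R ∧
    ∀ (i : Fin t) (j : Fin d), ε ↑i j = τ i j) (Classical.decPred _) Finset.univ

lemma mem_rlzF {d : ℕ} {ρ : ℝ} {a : ℕ → ℕ} {x : EuclideanSpace ℝ (Fin d)} {R : ℝ} {t : ℕ}
    {τ : Fin t → Fin d → Bool} :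
    τ ∈ rlzF d ρ a x R t ↔ ∃ ε, Adm a d ε ∧ pt d ρ ε ∈ closedBall x R ∧
      ∀ (i : Fin t) (j : Fin d), ε ↑i j = τ i j := by
  simp [rlzF]

/-- extension of a finite digit string by zeros -/
def ext0 {d t : ℕ} (τ : Fin t → Fin d → Bool) : ℕ → Fin d → Bool :=
  fun n j => if h : n < t then τ ⟨n, h⟩ j else false

/-- cardinality of realized prefixes at scales coarser than `R` is bounded by a constant -/
lemma rlz_card_le {d : ℕ} {ρ : ℝ} {a : ℕ → ℕ} (hd : 1 ≤ d) (hρ0 : 0 < ρ) (hρ : ρ ≤ 1 / 2)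
    (x : EuclideanSpace ℝ (Fin d)) (R : ℝ) (hR0 : 0 < R) (t : ℕ) (hRt : R ≤ ρ ^ t) :
    (rlzF d ρ a x R t).card ≤ (⌈2 * (1 + Real.sqrt d)⌉₊ + 1) ^ d := by
  have hρt : (0 : ℝ) < ρ ^ t := pow_pos hρ0 t
  have hd1 : (1 : ℝ) ≤ Real.sqrt d := by
    rw [show (1 : ℝ) = Real.sqrt 1 by simp]
    exact Real.sqrt_le_sqrt (by exact_mod_cast hd)
  refine binning (rlzF d ρ a x R t) (fun τ j => pt d ρ (ext0 τ) j) (fun j => x j)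
    ((1 + Real.sqrt d) * ρ ^ t) (ρ ^ t) hρt (by positivity) ⌈2 * (1 + Real.sqrt d)⌉₊ ?_ ?_ ?_
  · calc 2 * ((1 + Real.sqrt d) * ρ ^ t) / ρ ^ t = 2 * (1 + Real.sqrt d) := by
          field_simp
      _ ≤ (⌈2 * (1 + Real.sqrt d)⌉₊ : ℝ) := Nat.le_ceil _
  · intro τ hτ j
    obtain ⟨ε, hεa, hεb, hεc⟩ := mem_rlzF.1 hτ
    have h1 : dist (pt d ρ (ext0 τ)) (pt d ρ ε) ≤ Real.sqrt d * ρ ^ t := by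
      refine dist_le_of_agree hρ0 hρ _ _ t fun n hn j' => ?_
      rw [ext0]
      rw [dif_pos hn]
      exact (hεc ⟨n, hn⟩ j').symm
    have h2 : dist (pt d ρ ε) x ≤ R := mem_closedBall.1 hεb
    have h3 : |pt d ρ (ext0 τ) j - x j| ≤ dist (pt d ρ (ext0 τ)) x := dist_coord_le _ _ j
    have h4 : dist (pt d ρ (ext0 τ)) x ≤ Real.sqrt d * ρ ^ t + R := by
      calc dist (pt d ρ (ext0 τ)) x ≤ dist (pt d ρ (ext0 τ)) (pt d ρ ε) + dist (pt d ρ ε) x :=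
            dist_triangle _ _ _
        _ ≤ Real.sqrt d * ρ ^ t + R := add_le_add h1 h2
    have : Real.sqrt d * ρ ^ t + R ≤ (1 + Real.sqrt d) * ρ ^ t := by nlinarith
    linarith
  · intro τ hτ τ' hτ' hne
    refine exists_coord_sep hρ0 hρ _ _ t ?_ ?_ ?_
    · intro n hn j; rw [ext0, dif_neg (by omega)]
    · intro n hn j; rw [ext0, dif_neg (by omega)]
    · intro hc
      refine hne (funext fun i => funext fun j => ?_)
      have := congrFun (congrFun hc ↑i) j
      rwa [ext0, ext0, dif_pos i.2, dif_pos i.2, Fin.eta] at this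

section Upper
variable {d : ℕ} {ρ : ℝ} {a : ℕ → ℕ}

lemma sqrt_d_ge_one (hd : 1 ≤ d) : (1 : ℝ) ≤ Real.sqrt d := by
  rw [show (1 : ℝ) = Real.sqrt 1 by simp]
  exact Real.sqrt_le_sqrt (by exact_mod_cast hd)

lemma upper_mem (hd : 1 ≤ d) (hρ0 : 0 < ρ) (hρ : ρ ≤ 1 / 2)
    (ha : ∀ n, a n = 0 ∨ a n = 1) {α : ℝ}
    (hα : (d * Real.log 2 / Real.log (1 / ρ)) * atTop.limsup (fS a) < α) :
    0 < α ∧ ∃ C : ℝ, 0 < C ∧ ∀ r R : ℝ, 0 < r → r ≤ R → R < 1 → ∀ x ∈ moran d ρ a,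
      (coverNum r (closedBall x R ∩ moran d ρ a) : ℝ≥0∞) ≤ ENNReal.ofReal (C * (R / r) ^ α) := by
  classical
  have hρ1 : ρ < 1 := lt_of_le_of_lt hρ (by norm_num)
  have hρne : ρ ≠ 0 := hρ0.ne'
  have hlog : 0 < Real.log (1 / ρ) := Real.log_pos (one_lt_one_div hρ0 hρ1)
  have hd0 : (0 : ℝ) < d := by exact_mod_cast hd
  set θ := atTop.limsup (fS a) with hθdef
  set c0 := (d : ℝ) * Real.log 2 / Real.log (1 / ρ) with hc0def
  have hc0 : 0 < c0 := div_pos (mul_pos hd0 (Real.log_pos one_lt_two)) hlog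
  have hθ0 : 0 ≤ θ := theta_nonneg ha
  have hα0 : 0 < α := lt_of_le_of_lt (by positivity) hα
  set δ := (α - c0 * θ) / (2 * c0) with hδdef
  have hδ : 0 < δ := div_pos (by linarith) (by linarith)
  set β := c0 * (θ + δ) with hβdef
  have hβeq : β = c0 * θ + (α - c0 * θ) / 2 := by
    rw [hβdef, hδdef]
    field_simp
  have hβα : β ≤ α := by rw [hβeq]; linarith
  have hβ0 : 0 ≤ β := by positivity
  have hev : ∀ᶠ n in atTop, fS a n < θ + δ :=
    eventually_lt_of_limsup_lt (by linarith) (bdd_le ha)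
  obtain ⟨N, hN⟩ := eventually_atTop.1 hev
  have hwin : ∀ m L : ℕ, (Sn a m L : ℝ) ≤ L * (θ + δ) + N := by
    intro m L
    have hLpos : (0 : ℝ) ≤ (L : ℝ) * (θ + δ) := by positivity
    rcases le_or_gt (max N 1) L with hL | hL
    · have hL1 : 0 < L := le_trans (le_max_right _ _) hL
      have h1 := win_le_fS ha m L hL1
      have h2 : fS a L < θ + δ := hN L (le_trans (le_max_left _ _) hL)
      have hLr : (0 : ℝ) < L := by exact_mod_cast hL1
      rw [div_le_iff₀ hLr] at h1
      have hN0 : (0 : ℝ) ≤ N := Nat.cast_nonneg N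
      nlinarith
    · have h1 : Sn a m L ≤ L := Sn_le ha m L
      have h2 : L ≤ N := by omega
      have : (Sn a m L : ℝ) ≤ (N : ℝ) := by exact_mod_cast le_trans h1 h2
      linarith
  set Bd := ⌈2 * (1 + Real.sqrt d)⌉₊ with hBd
  set Cd := (Bd + 1) ^ d with hCd
  have hd1 : (1 : ℝ) ≤ Real.sqrt d := sqrt_d_ge_one hd
  set X := Real.sqrt d * (ρ⁻¹ * ρ⁻¹) with hX
  have hX1 : (1 : ℝ) ≤ X := by
    have h1 : (1 : ℝ) ≤ ρ⁻¹ := by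
      rw [← one_div]
      exact (one_lt_one_div hρ0 hρ1).le
    rw [hX]
    nlinarith
  have hX0 : (0 : ℝ) < X := lt_of_lt_of_le one_pos hX1
  refine ⟨hα0, (Cd * 2 ^ (d * N) : ℝ) * X ^ α, by positivity, ?_⟩
  intro r R hr hrR hR1 x hx
  have hR0 : 0 < R := lt_of_lt_of_le hr hrR
  -- minimal scale m with ρ^m ≤ R
  have hex_m : ∃ m : ℕ, ρ ^ m ≤ R := by
    obtain ⟨m, hm⟩ := exists_pow_lt_of_lt_one hR0 hρ1
    exact ⟨m, hm.le⟩
  set m := Nat.find hex_m with hmdef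
  have hm_le : ρ ^ m ≤ R := Nat.find_spec hex_m
  have hm_pos : 0 < m :=
    Nat.pos_of_ne_zero (fun h0 => by rw [h0, pow_zero] at hm_le; linarith)
  set m' := m - 1 with hm'def
  have hm'1 : m = m' + 1 := by omega
  have hRm' : R < ρ ^ m' := by
    have := Nat.find_min hex_m (show m' < m by omega)
    push_neg at this
    exact this
  have hRm : ρ ^ (m' + 1) ≤ R := by rw [← hm'1]; exact hm_le
  -- minimal scale nn with √d ρ^nn ≤ r
  have hsd0 : (0 : ℝ) < Real.sqrt d := lt_of_lt_of_le one_pos hd1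
  have hex_n : ∃ n : ℕ, Real.sqrt d * ρ ^ n ≤ r := by
    obtain ⟨n, hn⟩ := exists_pow_lt_of_lt_one (show (0:ℝ) < r / Real.sqrt d by positivity) hρ1
    refine ⟨n, ?_⟩
    rw [lt_div_iff₀ hsd0] at hn
    linarith [hn]
  set nn := Nat.find hex_n with hnndef
  have hn_le : Real.sqrt d * ρ ^ nn ≤ r := Nat.find_spec hex_n
  have hn_pos : 0 < nn :=
    Nat.pos_of_ne_zero (fun h0 => by rw [h0, pow_zero, mul_one] at hn_le; linarith)
  have hn_min : r < Real.sqrt d * ρ ^ (nn - 1) := by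
    have := Nat.find_min hex_n (show nn - 1 < nn by omega)
    push_neg at this
    exact this
  set P := rlzF d ρ a x R nn with hPdef
  set F := closedBall x R ∩ moran d ρ a with hF
  -- covering step
  have hch : ∀ τ ∈ P, ∃ ε, Adm a d ε ∧ pt d ρ ε ∈ closedBall x R ∧
      ∀ (i : Fin nn) (j : Fin d), ε ↑i j = τ i j := fun τ hτ => mem_rlzF.1 hτ
  have hcov : coverNum r F ≤ (P.card : ℕ∞) := by
    set S := P.attach.image (fun τ => pt d ρ (hch τ.1 τ.2).choose) with hS
    refine le_trans (coverNum_le_card S ?_ ?_) ?_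
    · intro z hz
      simp only [hS, Finset.coe_image, Set.mem_image, Finset.mem_coe, Finset.mem_attach] at hz
      obtain ⟨τ, -, rfl⟩ := hz
      obtain ⟨h1, h2, -⟩ := (hch τ.1 τ.2).choose_spec
      exact ⟨h2, pt_mem_moran _ h1⟩
    · intro y hy
      obtain ⟨hy1, hy2⟩ := hy
      obtain ⟨ε, hεa, rfl⟩ := mem_moran_iff.1 hy2
      have hτP : (fun (i : Fin nn) (j : Fin d) => ε ↑i j) ∈ P :=
        mem_rlzF.2 ⟨ε, hεa, hy1, fun i j => rfl⟩
      simp only [Set.mem_iUnion, mem_closedBall]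
      refine ⟨pt d ρ (hch _ hτP).choose, ?_, ?_⟩
      · simp only [hS, Finset.mem_coe, Finset.mem_image]
        exact ⟨⟨_, hτP⟩, Finset.mem_attach _ _, rfl⟩
      · obtain ⟨-, -, h3⟩ := (hch _ hτP).choose_spec
        have : dist (pt d ρ ε) (pt d ρ (hch _ hτP).choose) ≤ Real.sqrt d * ρ ^ nn := by
          refine dist_le_of_agree hρ0 hρ _ _ nn fun n hn j => ?_
          exact (h3 ⟨n, hn⟩ j).symm
        exact le_trans this hn_le
    · refine Nat.cast_le.2 (le_trans (Finset.card_image_le) ?_)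
      rw [Finset.card_attach]
  -- counting step
  set L := nn - m' with hLdef
  have hcard : P.card ≤ Cd * 2 ^ (d * Sn a m' L) := by
    rcases le_or_gt nn m' with hnm | hnm
    · have hL0 : L = 0 := by omega
      have h1 : P.card ≤ Cd := by
        refine rlz_card_le hd hρ0 hρ x R hR0 nn (le_trans hRm'.le ?_)
        exact pow_le_pow_of_le_one hρ0.le hρ1.le hnm
      have : Sn a m' L = 0 := by rw [hL0]; simp [Sn]
      rw [this, mul_zero, pow_zero, mul_one]
      exact h1
    · -- m' < nn
      set TF : Finset (Fin L → Fin d → Bool) := Finset.univ.filter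
        (fun σ => ∀ (i : Fin L) (j : Fin d), a (m' + ↑i + 1) = 0 → σ i j = false) with hTF
      have hTFcard : TF.card = 2 ^ (d * Sn a m' L) := by
        rw [hTF, ← Fintype.card_subtype]
        exact card_adm ha d m' L
      have hsplit : P.card ≤ (rlzF d ρ a x R m').card * TF.card := by
        rw [← Finset.card_product]
        refine Finset.card_le_card_of_injOn
          (fun τ => (fun (i : Fin m') (j : Fin d) => τ ⟨↑i, lt_trans i.2 hnm⟩ j,
                     fun (i : Fin L) (j : Fin d) => τ ⟨m' + ↑i, by have := i.2; omega⟩ j)) ?_ ?_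
        · intro τ hτ
          obtain ⟨ε, hεa, hεb, hεc⟩ := mem_rlzF.1 hτ
          rw [Finset.mem_coe, Finset.mem_product]
          constructor
          · refine mem_rlzF.2 ⟨ε, hεa, hεb, fun i j => ?_⟩
            exact hεc ⟨↑i, lt_trans i.2 hnm⟩ j
          · rw [hTF, Finset.mem_filter]
            refine ⟨Finset.mem_univ _, fun i j h0 => ?_⟩
            have hpf : m' + (↑i : ℕ) < nn := by have := i.2; omega
            show τ ⟨m' + ↑i, hpf⟩ j = false
            rw [← hεc ⟨m' + ↑i, hpf⟩ j]
            exact hεa (m' + ↑i) j h0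
        · intro τ hτ τ' hτ' heq
          have he1 := congrArg Prod.fst heq
          have he2 := congrArg Prod.snd heq
          simp only [] at he1 he2
          refine funext fun i => funext fun j => ?_
          rcases lt_or_ge (↑i : ℕ) m' with hi | hi
          · have h5 := congrFun (congrFun he1 ⟨↑i, hi⟩) j
            simpa using h5
          · have hiL : (↑i : ℕ) - m' < L := by have := i.2; omega
            have h5 := congrFun (congrFun he2 ⟨(↑i : ℕ) - m', hiL⟩) j
            have hieq : (⟨m' + ((↑i : ℕ) - m'), by have := i.2; omega⟩ : Fin nn) = i :=
              Fin.ext (by simp only [Fin.val_mk]; omega)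
            simp only [] at h5
            rwa [hieq] at h5
      have hhead : (rlzF d ρ a x R m').card ≤ Cd :=
        rlz_card_le hd hρ0 hρ x R hR0 m' hRm'.le
      calc P.card ≤ (rlzF d ρ a x R m').card * TF.card := hsplit
        _ ≤ Cd * TF.card := Nat.mul_le_mul_right _ hhead
        _ = Cd * 2 ^ (d * Sn a m' L) := by rw [hTFcard]
  -- real-number chase
  have hu0 : (0 : ℝ) < (1 / ρ) ^ L := by positivity
  have hu1 : (1 : ℝ) ≤ (1 / ρ) ^ L := one_le_pow₀ (le_of_lt (one_lt_one_div hρ0 hρ1))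
  have hRr1 : (1 : ℝ) ≤ R / r := (one_le_div hr).2 hrR
  have huX : (1 / ρ) ^ L ≤ X * (R / r) := by
    rcases Nat.eq_zero_or_pos L with hL0 | hLpos
    · rw [hL0, pow_zero]
      calc (1 : ℝ) ≤ X := hX1
        _ = X * 1 := (mul_one X).symm
        _ ≤ X * (R / r) := by
            refine mul_le_mul_of_nonneg_left hRr1 hX0.le
    · -- here m' < nn is forced: L = nn - m' > 0
      have hnm : m' < nn := by omega
      have hnn1 : nn - 1 = m' + (L - 1) := by omega
      have hL1 : L = 1 + (L - 1) := by omega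
      have hkey : (1 / ρ) ^ L * (Real.sqrt d * ρ ^ (nn - 1)) = Real.sqrt d * (ρ ^ m' / ρ) := by
        rw [hnn1]
        rw [show (1/ρ)^L = 1 / ρ ^ L by rw [div_pow, one_pow]]
        rw [hL1, pow_add, pow_add, pow_one]
        rw [show 1 + (L - 1) - 1 = L - 1 by omega]
        field_simp
      have h2 : (1 / ρ) ^ L * r ≤ Real.sqrt d * (ρ ^ m' / ρ) := by
        rw [← hkey]
        exact mul_le_mul_of_nonneg_left hn_min.le hu0.le
      have h3 : Real.sqrt d * (ρ ^ m' / ρ) ≤ X * R := by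
        rw [hX]
        have h4 : ρ ^ m' = ρ ^ (m' + 1) * ρ⁻¹ := by
          rw [pow_succ]
          field_simp
        calc Real.sqrt d * (ρ ^ m' / ρ) = Real.sqrt d * (ρ⁻¹ * ρ⁻¹) * ρ ^ (m' + 1) := by
              rw [h4]; field_simp; try ring
          _ ≤ Real.sqrt d * (ρ⁻¹ * ρ⁻¹) * R := by
              refine mul_le_mul_of_nonneg_left hRm (by positivity)
      have hfin : (1 / ρ) ^ L * r ≤ X * R := le_trans h2 h3
      rw [← mul_div_assoc]
      exact (le_div_iff₀ hr).2 hfin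
  -- combine: (P.card : ℝ) ≤ C * (R/r)^α
  have hmain : (P.card : ℝ) ≤ (Cd * 2 ^ (d * N) : ℝ) * X ^ α * (R / r) ^ α := by
    have h1 : (P.card : ℝ) ≤ (Cd : ℝ) * (2 : ℝ) ^ ((d * Sn a m' L : ℕ) : ℝ) := by
      rw [Real.rpow_natCast]
      exact_mod_cast hcard
    have h2 : ((d * Sn a m' L : ℕ) : ℝ) ≤ (d : ℝ) * ((L : ℝ) * (θ + δ)) + (d * N : ℕ) := by
      have hw := hwin m' L
      have hmul := mul_le_mul_of_nonneg_left hw hd0.le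
      push_cast
      push_cast at hmul
      linarith
    have h3 : (2 : ℝ) ^ ((d * Sn a m' L : ℕ) : ℝ)
        ≤ (2 : ℝ) ^ ((d : ℝ) * ((L : ℝ) * (θ + δ)) + (d * N : ℕ)) :=
      Real.rpow_le_rpow_of_exponent_le one_le_two h2
    have h4 : (2 : ℝ) ^ ((d : ℝ) * ((L : ℝ) * (θ + δ)) + ((d * N : ℕ) : ℝ))
        = (2 : ℝ) ^ ((d : ℝ) * ((L : ℝ) * (θ + δ))) * (2 : ℝ) ^ (d * N : ℕ) := by
      rw [Real.rpow_add two_pos, Real.rpow_natCast]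
    have h5 : (2 : ℝ) ^ ((d : ℝ) * ((L : ℝ) * (θ + δ))) = ((1 / ρ) ^ L) ^ β := by
      rw [Real.rpow_def_of_pos two_pos, Real.rpow_def_of_pos hu0]
      congr 1
      rw [Real.log_pow]
      rw [hβdef, hc0def]
      field_simp
    have h6 : ((1 / ρ) ^ L) ^ β ≤ (X * (R / r)) ^ β :=
      Real.rpow_le_rpow hu0.le huX hβ0
    have h7 : (X * (R / r)) ^ β ≤ (X * (R / r)) ^ α :=
      Real.rpow_le_rpow_of_exponent_le (le_trans hu1 huX) hβα
    have h8 : (X * (R / r)) ^ α = X ^ α * (R / r) ^ α :=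
      Real.mul_rpow hX0.le (by positivity)
    have hCd0 : (0 : ℝ) ≤ (Cd : ℝ) := Nat.cast_nonneg _
    calc (P.card : ℝ) ≤ (Cd : ℝ) * (2 : ℝ) ^ ((d * Sn a m' L : ℕ) : ℝ) := h1
      _ ≤ (Cd : ℝ) * ((2 : ℝ) ^ ((d : ℝ) * ((L : ℝ) * (θ + δ))) * (2 : ℝ) ^ (d * N : ℕ)) := by
          rw [← h4]
          exact mul_le_mul_of_nonneg_left h3 hCd0
      _ ≤ (Cd : ℝ) * ((X ^ α * (R / r) ^ α) * (2 : ℝ) ^ (d * N : ℕ)) := by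
          refine mul_le_mul_of_nonneg_left ?_ hCd0
          refine mul_le_mul_of_nonneg_right ?_ (by positivity)
          rw [h5]
          calc ((1 / ρ) ^ L) ^ β ≤ (X * (R / r)) ^ α := le_trans h6 h7
            _ = X ^ α * (R / r) ^ α := h8
      _ = (Cd * 2 ^ (d * N) : ℝ) * X ^ α * (R / r) ^ α := by ring
  -- conclude
  calc ((coverNum r F : ℕ∞) : ℝ≥0∞) ≤ ((P.card : ℕ∞) : ℝ≥0∞) := ENat.toENNReal_le.2 hcov
    _ = ((P.card : ℕ) : ℝ≥0∞) := ENat.toENNReal_coe _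
    _ = ENNReal.ofReal (P.card : ℝ) := (ENNReal.ofReal_natCast _).symm
    _ ≤ ENNReal.ofReal ((Cd * 2 ^ (d * N) : ℝ) * X ^ α * (R / r) ^ α) :=
        ENNReal.ofReal_le_ofReal hmain

end Upper

section Lower
variable {d : ℕ} {ρ : ℝ} {a : ℕ → ℕ}

lemma lower_ge (hd : 1 ≤ d) (hρ0 : 0 < ρ) (hρ : ρ ≤ 1 / 2)
    (ha : ∀ n, a n = 0 ∨ a n = 1) {α : ℝ}
    (hmem : 0 < α ∧ ∃ C : ℝ, 0 < C ∧ ∀ r R : ℝ, 0 < r → r ≤ R → R < 1 → ∀ x ∈ moran d ρ a,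
      (coverNum r (closedBall x R ∩ moran d ρ a) : ℝ≥0∞) ≤ ENNReal.ofReal (C * (R / r) ^ α)) :
    (d * Real.log 2 / Real.log (1 / ρ)) * atTop.limsup (fS a) ≤ α := by
  classical
  obtain ⟨hα0, C, hC0, hP⟩ := hmem
  by_contra hlt
  push_neg at hlt
  have hρ1 : ρ < 1 := lt_of_le_of_lt hρ (by norm_num)
  have hρne : ρ ≠ 0 := hρ0.ne'
  have hlog : 0 < Real.log (1 / ρ) := Real.log_pos (one_lt_one_div hρ0 hρ1)
  have hd0 : (0 : ℝ) < d := by exact_mod_cast hd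
  have hd1 : (1 : ℝ) ≤ Real.sqrt d := sqrt_d_ge_one hd
  have hsd0 : (0 : ℝ) < Real.sqrt d := lt_of_lt_of_le one_pos hd1
  set θ := atTop.limsup (fS a) with hθdef
  set c0 := (d : ℝ) * Real.log 2 / Real.log (1 / ρ) with hc0def
  have hc0 : 0 < c0 := div_pos (mul_pos hd0 (Real.log_pos one_lt_two)) hlog
  have hid : c0 * Real.log (1 / ρ) = d * Real.log 2 := by
    rw [hc0def]
    field_simp
  set δ := (θ - α / c0) / 2 with hδdef
  have hac0 : α / c0 < θ := (div_lt_iff₀ hc0).2 (by linarith [hlt])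
  have hδ : 0 < δ := by rw [hδdef]; linarith
  have hθδ : α / c0 < θ - δ := by rw [hδdef]; linarith
  have hαθδ : α < c0 * (θ - δ) := by
    have := (div_lt_iff₀ hc0).1 hθδ
    linarith
  set g := (d : ℝ) * (θ - δ) * Real.log 2 - α * Real.log (1 / ρ) with hgdef
  have hg : 0 < g := by
    have h1 : (d : ℝ) * (θ - δ) * Real.log 2 = c0 * (θ - δ) * Real.log (1 / ρ) := by
      linear_combination (δ - θ) * hid
    rw [hgdef, h1]
    nlinarith
  obtain ⟨c, hc⟩ : ∃ c : ℕ, Real.sqrt d * ρ ^ c ≤ 1 / 2 := by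
    obtain ⟨c, hc⟩ := exists_pow_lt_of_lt_one
      (show (0 : ℝ) < (1 / 2) / Real.sqrt d by positivity) hρ1
    refine ⟨c, ?_⟩
    rw [lt_div_iff₀ hsd0] at hc
    linarith
  set K := C * (3 * Real.sqrt d * ρ ^ c) ^ α with hKdef
  have hK0 : 0 < K := mul_pos hC0 (Real.rpow_pos_of_pos (by positivity) α)
  set C2 := K * Real.exp ((d : ℝ) * c * Real.log 2) with hC2def
  have hC20 : 0 < C2 := mul_pos hK0 (Real.exp_pos _)
  obtain ⟨n0, hn0⟩ := exists_nat_gt (Real.log C2 / g)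
  have hfreq : ∃ᶠ n in atTop, θ - δ < fS a n :=
    frequently_lt_of_lt_limsup ((bdd_ge ha).isCoboundedUnder_le) (by linarith)
  obtain ⟨n, hn_ge, hfn⟩ := frequently_atTop.1 hfreq (max n0 (c + 1))
  have hn_n0 : n0 ≤ n := le_trans (le_max_left _ _) hn_ge
  have hn_c1 : c + 1 ≤ n := le_trans (le_max_right _ _) hn_ge
  have hn_pos : 0 < n := by omega
  have hnr : (0 : ℝ) < n := by exact_mod_cast hn_pos
  obtain ⟨k, hk⟩ := exists_lt_of_lt_ciSup hfn
  rw [W_eq_Sn] at hk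
  have hkS : (n : ℝ) * (θ - δ) < Sn a k n := by
    rw [lt_div_iff₀ hnr] at hk
    linarith
  -- embedded digit strings
  set L := n - c with hLdef
  set emb : (Fin L → Fin d → Bool) → ℕ → Fin d → Bool := fun σ t j =>
    if h : k + c ≤ t ∧ t < k + n then σ ⟨t - (k + c), by omega⟩ j else false with hembdef
  set TF : Finset (Fin L → Fin d → Bool) := Finset.univ.filter
    (fun σ => ∀ (i : Fin L) (j : Fin d), a (k + c + ↑i + 1) = 0 → σ i j = false) with hTF
  have hTFcard : TF.card = 2 ^ (d * Sn a (k + c) L) := by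
    rw [hTF, ← Fintype.card_subtype]
    exact card_adm ha d (k + c) L
  have hTFmem : ∀ σ : Fin L → Fin d → Bool, σ ∈ TF ↔
      ∀ (i : Fin L) (j : Fin d), a (k + c + ↑i + 1) = 0 → σ i j = false := by
    intro σ
    rw [hTF, Finset.mem_filter]
    simp
  have hadm : ∀ σ ∈ TF, Adm a d (emb σ) := by
    intro σ hσ t j h0
    show emb σ t j = false
    rw [hembdef]
    dsimp only
    by_cases h : k + c ≤ t ∧ t < k + n
    · rw [dif_pos h]
      refine (hTFmem σ).1 hσ ⟨t - (k + c), by omega⟩ j ?_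
      have harg : a (k + c + (t - (k + c)) + 1) = 0 := by
        rw [show k + c + (t - (k + c)) + 1 = t + 1 by omega]
        exact h0
      simpa using harg
    · rw [dif_neg h]
  have hsupp : ∀ σ : Fin L → Fin d → Bool, ∀ t, k + n ≤ t → ∀ j, emb σ t j = false := by
    intro σ t ht j
    rw [hembdef]
    dsimp only
    rw [dif_neg (by omega)]
  have hembinj : ∀ σ σ' : Fin L → Fin d → Bool, σ ≠ σ' → emb σ ≠ emb σ' := by
    intro σ σ' hne hc'
    refine hne (funext fun i => funext fun j => ?_)
    have h1 := congrFun (congrFun hc' (k + c + ↑i)) j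
    rw [hembdef] at h1
    dsimp only at h1
    have hin : k + c ≤ k + c + ↑i ∧ k + c + ↑i < k + n := by
      have := i.2
      omega
    rw [dif_pos hin, dif_pos hin] at h1
    have hieq : (⟨k + c + ↑i - (k + c), by omega⟩ : Fin L) = i :=
      Fin.ext (by simp only [Fin.val_mk]; omega)
    rwa [hieq] at h1
  have hsep : ∀ σ σ' : Fin L → Fin d → Bool, σ ≠ σ' →
      ρ ^ (k + n) ≤ dist (pt d ρ (emb σ)) (pt d ρ (emb σ')) := by
    intro σ σ' hne
    exact dist_sep hρ0 hρ _ _ (k + n) (fun t ht j => hsupp σ t ht j)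
      (fun t ht j => hsupp σ' t ht j) (hembinj σ σ' hne)
  set R := Real.sqrt d * ρ ^ (k + c) with hRdef
  set r := ρ ^ (k + n) / 3 with hrdef
  have hr0 : 0 < r := by rw [hrdef]; positivity
  have hρkc : (0:ℝ) < ρ ^ (k + c) := pow_pos hρ0 _
  have hR1 : R < 1 := by
    have h1 : ρ ^ (k + c) ≤ ρ ^ c := by
      rw [pow_add]
      exact mul_le_of_le_one_left (pow_nonneg hρ0.le c) (pow_le_one₀ hρ0.le hρ1.le)
    have h3 : R ≤ Real.sqrt d * ρ ^ c := by
      rw [hRdef]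
      exact mul_le_mul_of_nonneg_left h1 hsd0.le
    linarith
  have hrR : r ≤ R := by
    have h1 : ρ ^ (k + n) ≤ ρ ^ (k + c) := pow_le_pow_of_le_one hρ0.le hρ1.le (by omega)
    have h2 : ρ ^ (k + c) ≤ Real.sqrt d * ρ ^ (k + c) :=
      le_mul_of_one_le_left hρkc.le hd1
    rw [hrdef, hRdef]
    linarith [pow_pos hρ0 (k + n)]
  set σ0 : Fin L → Fin d → Bool := fun _ _ => false with hσ0
  have hσ0TF : σ0 ∈ TF := (hTFmem σ0).2 (fun i j _ => rfl)
  set x := pt d ρ (emb σ0) with hxdef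
  have hxK : x ∈ moran d ρ a := pt_mem_moran _ (hadm σ0 hσ0TF)
  set T := TF.image (fun σ => pt d ρ (emb σ)) with hT
  have hTcard : T.card = TF.card := by
    refine Finset.card_image_of_injOn fun σ hσ σ' hσ' hpt => ?_
    by_contra hne
    have := hsep σ σ' hne
    rw [hpt, dist_self] at this
    linarith [pow_pos hρ0 (k + n)]
  have hagree : ∀ σ : Fin L → Fin d → Bool,
      dist (pt d ρ (emb σ)) x ≤ Real.sqrt d * ρ ^ (k + c) := by
    intro σ
    rw [hxdef]
    refine dist_le_of_agree hρ0 hρ _ _ (k + c) fun t ht j => ?_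
    rw [hembdef]
    dsimp only
    rw [dif_neg (by omega), dif_neg (by omega)]
  have hTsub : ↑T ⊆ closedBall x R ∩ moran d ρ a := by
    intro z hz
    simp only [hT, Finset.coe_image, Set.mem_image, Finset.mem_coe] at hz
    obtain ⟨σ, hσ, rfl⟩ := hz
    exact ⟨mem_closedBall.2 (hagree σ), pt_mem_moran _ (hadm σ hσ)⟩
  have hTsep : ∀ y ∈ T, ∀ z ∈ T, y ≠ z → 2 * r < dist y z := by
    intro y hy z hz hne
    simp only [hT, Finset.mem_image] at hy hz
    obtain ⟨σ, hσ, rfl⟩ := hy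
    obtain ⟨σ', hσ', rfl⟩ := hz
    have hσne : σ ≠ σ' := fun h => hne (by rw [h])
    have := hsep σ σ' hσne
    rw [hrdef]
    linarith [pow_pos hρ0 (k + n)]
  have hcover := hP r R hr0 hrR hR1 x hxK
  have hTle : (T.card : ℕ∞) ≤ coverNum r (closedBall x R ∩ moran d ρ a) :=
    card_le_coverNum hr0.le T hTsub hTsep
  -- pass to reals
  have hreal : ((2 : ℝ) ^ (d * Sn a (k + c) L) : ℝ) ≤ C * (R / r) ^ α := by
    have h1 : ((TF.card : ℕ∞) : ℝ≥0∞) ≤ ENNReal.ofReal (C * (R / r) ^ α) := by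
      calc ((TF.card : ℕ∞) : ℝ≥0∞) = ((T.card : ℕ∞) : ℝ≥0∞) := by rw [hTcard]
        _ ≤ (coverNum r (closedBall x R ∩ moran d ρ a) : ℝ≥0∞) := ENat.toENNReal_le.2 hTle
        _ ≤ ENNReal.ofReal (C * (R / r) ^ α) := hcover
    rw [ENat.toENNReal_coe, ← ENNReal.ofReal_natCast,
      ENNReal.ofReal_le_ofReal_iff (by positivity)] at h1
    calc ((2 : ℝ) ^ (d * Sn a (k + c) L) : ℝ) = ((TF.card : ℕ) : ℝ) := by
          rw [hTFcard]; push_cast; ring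
      _ ≤ C * (R / r) ^ α := h1
  -- lower bound the left side
  have hSn_ge : (n : ℝ) * (θ - δ) - c ≤ (Sn a (k + c) L : ℝ) := by
    have h1 : Sn a k n = Sn a k c + Sn a (k + c) L := by
      rw [hLdef]
      exact Sn_split ha k c n (by omega)
    have h2 : Sn a k c ≤ c := Sn_le ha k c
    have h3 : (Sn a k n : ℝ) ≤ Sn a k c + Sn a (k + c) L := by
      rw [h1]; push_cast; linarith
    have h4 : (Sn a k c : ℝ) ≤ c := by exact_mod_cast h2
    linarith [hkS]
  have hlhs : Real.exp (((d : ℝ) * ((n : ℝ) * (θ - δ) - c)) * Real.log 2)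
      ≤ (2 : ℝ) ^ (d * Sn a (k + c) L) := by
    have h1 : ((2 : ℝ) ^ (d * Sn a (k + c) L)) =
        Real.exp (((d * Sn a (k + c) L : ℕ) : ℝ) * Real.log 2) := by
      rw [← Real.rpow_natCast 2 (d * Sn a (k + c) L), Real.rpow_def_of_pos two_pos]
      ring_nf
    rw [h1, Real.exp_le_exp]
    have h2 : (d : ℝ) * ((n : ℝ) * (θ - δ) - c) ≤ ((d * Sn a (k + c) L : ℕ) : ℝ) := by
      push_cast
      have := mul_le_mul_of_nonneg_left hSn_ge hd0.le
      linarith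
    exact mul_le_mul_of_nonneg_right h2 (Real.log_pos (by norm_num)).le
  -- compute R / r
  have hRr : R / r = (3 * Real.sqrt d * ρ ^ c) * (1 / ρ) ^ n := by
    rw [hRdef, hrdef]
    rw [show (1/ρ)^n = 1 / ρ ^ n by rw [div_pow, one_pow]]
    rw [pow_add, pow_add]
    field_simp
  have hrhs : C * (R / r) ^ α =
      K * Real.exp (α * ((n : ℝ) * Real.log (1 / ρ))) := by
    rw [hRr, Real.mul_rpow (by positivity) (by positivity), hKdef]
    have h1 : ((1 / ρ : ℝ) ^ n) ^ α = Real.exp (α * ((n : ℝ) * Real.log (1 / ρ))) := by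
      rw [Real.rpow_def_of_pos (by positivity), Real.log_pow]
      ring_nf
    rw [h1]
    ring
  -- contradiction
  have hfinal : Real.exp ((n : ℝ) * g - (d : ℝ) * c * Real.log 2) ≤ K := by
    have h1 : Real.exp (((d : ℝ) * ((n : ℝ) * (θ - δ) - c)) * Real.log 2)
        ≤ K * Real.exp (α * ((n : ℝ) * Real.log (1 / ρ))) := by
      rw [← hrhs]
      exact le_trans hlhs hreal
    have h2 : Real.exp ((n : ℝ) * g - (d : ℝ) * c * Real.log 2)
        * Real.exp (α * ((n : ℝ) * Real.log (1 / ρ)))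
        = Real.exp (((d : ℝ) * ((n : ℝ) * (θ - δ) - c)) * Real.log 2) := by
      rw [← Real.exp_add]
      congr 1
      rw [hgdef]
      ring
    have h3 := Real.exp_pos (α * ((n : ℝ) * Real.log (1 / ρ)))
    have h4 : Real.exp ((n : ℝ) * g - (d : ℝ) * c * Real.log 2)
        * Real.exp (α * ((n : ℝ) * Real.log (1 / ρ)))
        ≤ K * Real.exp (α * ((n : ℝ) * Real.log (1 / ρ))) := h2.trans_le h1
    exact le_of_mul_le_mul_right h4 h3
  have hng : Real.log C2 < (n : ℝ) * g := by
    have h1 : Real.log C2 / g < (n : ℝ) := lt_of_lt_of_le hn0 (by exact_mod_cast hn_n0)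
    rw [div_lt_iff₀ hg] at h1
    linarith
  have hcontr : K < Real.exp ((n : ℝ) * g - (d : ℝ) * c * Real.log 2) := by
    have h1 : Real.log C2 = Real.log K + (d : ℝ) * c * Real.log 2 := by
      rw [hC2def, Real.log_mul hK0.ne' (Real.exp_pos _).ne', Real.log_exp]
    have h2 : Real.log K < (n : ℝ) * g - (d : ℝ) * c * Real.log 2 := by
      rw [h1] at hng
      linarith
    calc K = Real.exp (Real.log K) := (Real.exp_log hK0).symm
      _ < Real.exp ((n : ℝ) * g - (d : ℝ) * c * Real.log 2) := Real.exp_lt_exp.2 h2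
  linarith

end Lower

end S15

/-- the Assouad dimension of `K_ρ(a)`, for `ρ ∈ (0, 1/2]` and a binary
sequence `a`, equals `(d log 2 / log (1/ρ))` times
`limsup_n sup_k (a_{k+1} + ⋯ + a_{k+n})/n`. -/
theorem statement15 (d : ℕ) (hd : 1 ≤ d) (ρ : ℝ) (hρ0 : 0 < ρ) (hρ : ρ ≤ 1 / 2)
    (a : ℕ → ℕ) (ha : ∀ n, a n = 0 ∨ a n = 1) :
    assouadDim (moran d ρ a) =
      (d * Real.log 2 / Real.log (1 / ρ)) *
        Filter.atTop.limsup
          (fun n : ℕ => ⨆ k : ℕ, (∑ i ∈ Finset.Ico k (k + n), (a (i + 1) : ℝ)) / n) := by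
  have hfS : (fun n : ℕ => ⨆ k : ℕ, (∑ i ∈ Finset.Ico k (k + n), (a (i + 1) : ℝ)) / n)
      = S15.fS a := rfl
  rw [hfS]
  set s := (d * Real.log 2 / Real.log (1 / ρ)) * Filter.atTop.limsup (S15.fS a) with hsdef
  set A := {α : ℝ | 0 < α ∧ ∃ C : ℝ, 0 < C ∧ ∀ r R : ℝ, 0 < r → r ≤ R → R < 1 →
      ∀ x ∈ moran d ρ a,
      (coverNum r (closedBall x R ∩ moran d ρ a) : ℝ≥0∞) ≤ ENNReal.ofReal (C * (R / r) ^ α)}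
    with hA
  have hupper : ∀ α : ℝ, s < α → α ∈ A := by
    intro α hα
    exact S15.upper_mem hd hρ0 hρ ha hα
  have hlower : ∀ α ∈ A, s ≤ α := by
    intro α hα
    exact S15.lower_ge hd hρ0 hρ ha hα
  have hbdd : BddBelow A := ⟨s, fun α hα => hlower α hα⟩
  have hne : A.Nonempty := ⟨s + 1, hupper (s + 1) (by linarith)⟩
  show sInf A = s
  refine le_antisymm ?_ (le_csInf hne hlower)
  refine le_of_forall_pos_le_add fun ε hε => ?_
  exact csInf_le hbdd (hupper (s + ε) (by linarith))
end
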